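/- arXiv:1707.00807 — 11 statements merged into one kernel-verified Lean document; each statement's English description precedes it below -/
import Mathlib

section
/- Let B : Ω → ℝ be a 𝓖-measurable random variable with 0 ≤ B ≤ A pointwise, and let 𝓗 be the σ-algebra generated by the single event {B < Φ}. Then P-almost surely, E[1_{{A < Φ}} | 𝓖 ⊔ 𝓗] = 1_{{B < Φ}} · e^{−(A − B)}. (This is the paper's identity P(τ > T | 𝒢_T ∨ 𝓗_t) = 1_{{τ > t}} exp(−∫_t^T μ_s ds), with B = ∫_0^t μ_s ds and A = ∫_0^T μ_s ds.) -/
open MeasureTheory ProbabilityTheory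
open scoped ENNReal

/-!
Independence makes the joint law of `(Φ, ω)` on `ℝ × (Ω, 𝓖)` a product measure, so by Tonelli
integrating a `𝓖`-measurable weight over `{C < Φ}` amounts to weighting it by
`P(Φ > C) = e^{-C}`. With `C = A` and `C = B` this shows that `P(s ∩ {A < Φ})` and
`∫_{s ∩ {B < Φ}} e^{-(A-B)} dP` are both `E[1_s e^{-A}]` for `s ∈ 𝓖`. As `{A < Φ} ⊆ {B < Φ}`,
the two sides also agree on the sets `s ∩ {B < Φ}`, which together with `𝓖` form a π-system
generating `𝓖 ⊔ 𝓗`; hence `1_{B < Φ} e^{-(A-B)}` is the conditional expectation.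
-/

section
variable {Ω β : Type*} {m m0 : MeasurableSpace Ω} [mβ : MeasurableSpace β] {P : Measure Ω}

lemma map_prodMk_id_eq_prod_trim [IsFiniteMeasure P] (hm : m ≤ m0) {X : Ω → β}
    (hX : Measurable X) (hindep : Indep (mβ.comap X) m P) :
    @Measure.map Ω (β × Ω) m0 (mβ.prod m) (fun ω => (X ω, ω)) P
      = @Measure.prod β Ω mβ m (P.map X) (P.trim hm) := by
  have hid : @IndepFun Ω β Ω m0 mβ m X id P := by
    rw [← MeasurableSpace.comap_id (m := m)] at hindep
    exact hindep
  rw [trim_eq_map hm]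
  exact (indepFun_iff_map_prod_eq_prod_map_map (mβ' := m) hX.aemeasurable
    (@Measurable.aemeasurable Ω Ω m0 m id P (measurable_id'' hm))).mp hid

lemma lintegral_comp_prodMk_eq_of_indep [IsFiniteMeasure P] (hm : m ≤ m0) {X : Ω → β}
    (hX : Measurable X) (hindep : Indep (mβ.comap X) m P) {F : β × Ω → ℝ≥0∞}
    (hF : Measurable[mβ.prod m] F) :
    ∫⁻ ω, F (X ω, ω) ∂P = ∫⁻ ω, ∫⁻ x, F (x, ω) ∂(P.map X) ∂P := by
  have hXid : Measurable[m0, mβ.prod m] fun ω => (X ω, ω) := hX.prodMk (measurable_id'' hm)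
  have : IsFiniteMeasure (P.trim hm) := isFiniteMeasure_trim hm
  rw [← @lintegral_map _ _ m0 (mβ.prod m) _ _ _ hF hXid, map_prodMk_id_eq_prod_trim hm hX hindep,
    @lintegral_prod_symm' β Ω mβ m _ _ _ _ F hF, lintegral_trim hm]
  exact @Measurable.lintegral_prod_left' β Ω mβ m _ _ _ hF

end

section
variable {Ω : Type*} {m m0 : MeasurableSpace Ω}

lemma measure_eq_on_sup_generateFrom_singleton (hm : m ≤ m0) {μ ν : Measure Ω}
    [IsFiniteMeasure μ] {S : Set Ω} (hS : MeasurableSet S)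
    (heq : ∀ s, MeasurableSet[m] s → μ s = ν s)
    (heq_inter : ∀ s, MeasurableSet[m] s → μ (s ∩ S) = ν (s ∩ S))
    {t : Set Ω} (ht : MeasurableSet[m ⊔ MeasurableSpace.generateFrom {S}] t) : μ t = ν t := by
  set C : Set (Set Ω) := {u | ∃ s, MeasurableSet[m] s ∧ (u = s ∨ u = s ∩ S)}
  have hgen : m ⊔ MeasurableSpace.generateFrom {S} = MeasurableSpace.generateFrom C := by
    refine le_antisymm (sup_le ?_ ?_) (MeasurableSpace.generateFrom_le ?_)
    · exact fun s hs => MeasurableSpace.measurableSet_generateFrom ⟨s, hs, Or.inl rfl⟩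
    · refine MeasurableSpace.generateFrom_le fun u hu => ?_
      rw [Set.mem_singleton_iff.mp hu]
      exact MeasurableSpace.measurableSet_generateFrom
        ⟨Set.univ, MeasurableSet.univ, Or.inr (Set.univ_inter S).symm⟩
    · rintro u ⟨s, hs, rfl | rfl⟩
      · exact le_sup_left (a := m) _ hs
      · exact (le_sup_left (a := m) _ hs).inter
          (le_sup_right (a := m) _ (MeasurableSpace.measurableSet_generateFrom rfl))
  have hpi : IsPiSystem C := by
    rintro u ⟨s, hs, hu⟩ v ⟨s', hs', hv⟩ -
    refine ⟨s ∩ s', hs.inter hs', ?_⟩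
    rcases hu with rfl | rfl <;> rcases hv with rfl | rfl
    · exact Or.inl rfl
    all_goals refine Or.inr (by ext; simp only [Set.mem_inter_iff]; tauto)
  refine ext_on_measurableSpace_of_generate_finite m0 C ?_
    (sup_le hm (MeasurableSpace.generateFrom_le ?_)) hgen hpi (heq _ MeasurableSet.univ) ht
  · rintro u ⟨s, hs, rfl | rfl⟩
    exacts [heq _ hs, heq_inter _ hs]
  · rintro u hu
    rwa [Set.mem_singleton_iff.mp hu]

lemma condExp_indicator_ae_eq_of_measure_inter_eq (hm : m ≤ m0) {P : Measure Ω}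
    [IsFiniteMeasure P] {T : Set Ω} (hT : MeasurableSet T) {g : Ω → ℝ} (hg : Measurable[m] g)
    (hg0 : ∀ ω, 0 ≤ g ω)
    (hPg : ∀ s, MeasurableSet[m] s → P (s ∩ T) = ∫⁻ ω in s, ENNReal.ofReal (g ω) ∂P) :
    P[T.indicator (fun _ => (1 : ℝ)) | m] =ᵐ[P] g := by
  have hg_int : Integrable g P := by
    refine ⟨(hg.mono hm le_rfl).aestronglyMeasurable, ?_⟩
    rw [hasFiniteIntegral_iff_ofReal (.of_forall hg0), ← setLIntegral_univ,
      ← hPg _ MeasurableSet.univ]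
    exact measure_lt_top P _
  refine (ae_eq_condExp_of_forall_setIntegral_eq hm ((integrable_const 1).indicator hT)
    (fun s _ _ => hg_int.integrableOn) (fun s hs _ => ?_) hg.aestronglyMeasurable).symm
  rw [setIntegral_indicator hT, setIntegral_const, smul_eq_mul, mul_one, measureReal_def,
    hPg s hs, integral_eq_lintegral_of_nonneg_ae (.of_forall hg0)
      (hg.mono hm le_rfl).aestronglyMeasurable.restrict]

end

section
variable {Ω : Type*} {m m0 : MeasurableSpace Ω} {P : Measure Ω} [IsFiniteMeasure P] {Φ : Ω → ℝ}

lemma setLIntegral_lt_eq_lintegral_mul_measure_lt (hm : m ≤ m0) (hΦ : Measurable Φ)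
    (hindep : Indep (MeasurableSpace.comap Φ inferInstance) m P)
    {f : Ω → ℝ≥0∞} (hf : Measurable[m] f) {C : Ω → ℝ} (hC : Measurable[m] C) :
    ∫⁻ ω in {ω | C ω < Φ ω}, f ω ∂P = ∫⁻ ω, f ω * P {ω' | C ω < Φ ω'} ∂P := by
  have hlt : MeasurableSet[borel ℝ |>.prod m] {p : ℝ × Ω | C p.2 < p.1} :=
    @measurableSet_lt ℝ (ℝ × Ω) _ _ _ (borel ℝ |>.prod m) _ _ _ _ _
      (hC.comp (@measurable_snd ℝ Ω _ m)) (@measurable_fst ℝ Ω _ m)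
  rw [← lintegral_indicator (measurableSet_lt (hC.mono hm le_rfl) hΦ)]
  refine (lintegral_comp_prodMk_eq_of_indep (F := {p : ℝ × Ω | C p.2 < p.1}.indicator
    fun p => f p.2) hm hΦ hindep ((hf.comp (@measurable_snd ℝ Ω _ m)).indicator hlt)).trans ?_
  refine lintegral_congr fun ω => ?_
  have hIoi : ∀ x, {p : ℝ × Ω | C p.2 < p.1}.indicator (fun p => f p.2) (x, ω)
      = (Set.Ioi (C ω)).indicator (fun _ => f ω) x := fun _ => rfl
  simp_rw [hIoi, lintegral_indicator_const measurableSet_Ioi,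
    Measure.map_apply hΦ measurableSet_Ioi]
  rfl

lemma measure_inter_lt_eq_setLIntegral_exp_neg (hm : m ≤ m0) (hΦ : Measurable Φ)
    (hlaw : ∀ s : ℝ, 0 ≤ s → P {ω | s < Φ ω} = ENNReal.ofReal (Real.exp (-s)))
    (hindep : Indep (MeasurableSpace.comap Φ inferInstance) m P) {A B : Ω → ℝ}
    (hA : Measurable[m] A) (hB : Measurable[m] B) (hB0 : ∀ ω, 0 ≤ B ω)
    (hBA : ∀ ω, B ω ≤ A ω) {s : Set Ω} (hs : MeasurableSet[m] s) :
    P (s ∩ {ω | A ω < Φ ω})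
      = ∫⁻ ω in s ∩ {ω | B ω < Φ ω}, ENNReal.ofReal (Real.exp (-(A ω - B ω))) ∂P := by
  set e : Ω → ℝ≥0∞ := fun ω => ENNReal.ofReal (Real.exp (-(A ω - B ω)))
  have he : Measurable[m] e := by fun_prop
  calc P (s ∩ {ω | A ω < Φ ω})
      = ∫⁻ ω in {ω | A ω < Φ ω}, s.indicator 1 ω ∂P := by
        rw [setLIntegral_indicator (hm s hs)]
        exact (setLIntegral_one _).symm
    _ = ∫⁻ ω, s.indicator 1 ω * ENNReal.ofReal (Real.exp (-A ω)) ∂P := by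
        rw [setLIntegral_lt_eq_lintegral_mul_measure_lt hm hΦ hindep (f := s.indicator 1)
          (measurable_const.indicator hs) hA]
        exact lintegral_congr fun ω => by rw [hlaw _ ((hB0 ω).trans (hBA ω))]
    _ = ∫⁻ ω, s.indicator e ω * ENNReal.ofReal (Real.exp (-B ω)) ∂P := by
        refine lintegral_congr fun ω => ?_
        by_cases hω : ω ∈ s
        · rw [Set.indicator_of_mem hω, Set.indicator_of_mem hω, Pi.one_apply, one_mul,
            ← ENNReal.ofReal_mul (Real.exp_nonneg _), ← Real.exp_add]
          ring_nf
        · simp only [Set.indicator_of_notMem hω, zero_mul]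
    _ = ∫⁻ ω in {ω | B ω < Φ ω}, s.indicator e ω ∂P := by
        rw [setLIntegral_lt_eq_lintegral_mul_measure_lt hm hΦ hindep (he.indicator hs) hB]
        exact lintegral_congr fun ω => by rw [hlaw _ (hB0 ω)]
    _ = ∫⁻ ω in s ∩ {ω | B ω < Φ ω}, e ω ∂P := setLIntegral_indicator (hm s hs) _

end

theorem survival_condexp_enlarged_general {Ω : Type*} {mF : MeasurableSpace Ω}
    (P : Measure Ω) [IsProbabilityMeasure P]
    (Φ : Ω → ℝ) (hΦ : Measurable Φ)
    (hlaw : ∀ s : ℝ, 0 ≤ s → P {ω | s < Φ ω} = ENNReal.ofReal (Real.exp (-s)))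
    (G : MeasurableSpace Ω) (hG : G ≤ mF)
    (hindep : Indep (MeasurableSpace.comap Φ inferInstance) G P)
    (A : Ω → ℝ) (hA : Measurable[G] A)
    (B : Ω → ℝ) (hB : Measurable[G] B) (hB0 : ∀ ω, 0 ≤ B ω) (hBA : ∀ ω, B ω ≤ A ω)
    (H : MeasurableSpace Ω)
    (hH : H = MeasurableSpace.generateFrom {{ω | B ω < Φ ω}}) :
    P[Set.indicator {ω | A ω < Φ ω} (fun _ => (1 : ℝ)) | G ⊔ H]
      =ᵐ[P] fun ω =>
        Set.indicator {ω | B ω < Φ ω} (fun _ => (1 : ℝ)) ω * Real.exp (-(A ω - B ω)) := by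
  subst hH
  set S := {ω | B ω < Φ ω}
  set T := {ω | A ω < Φ ω}
  have hS : MeasurableSet[mF] S := measurableSet_lt (hB.mono hG le_rfl) hΦ
  have hT : MeasurableSet[mF] T := measurableSet_lt (hA.mono hG le_rfl) hΦ
  have hTS : T ⊆ S := fun ω hω => (hBA ω).trans_lt hω
  set ν := P.withDensity fun ω =>
    ENNReal.ofReal (S.indicator (fun _ => 1) ω * Real.exp (-(A ω - B ω)))
  have hν : ∀ t, ν t = ∫⁻ ω in t ∩ S, ENNReal.ofReal (Real.exp (-(A ω - B ω))) ∂P := by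
    intro t
    rw [withDensity_apply', Set.inter_comm, ← setLIntegral_indicator (μ := P) hS]
    refine lintegral_congr fun ω => ?_
    by_cases hω : ω ∈ S <;> simp [hω]
  have hG_sets : ∀ s, MeasurableSet[G] s → P.restrict T s = ν s := fun s hs => by
    rw [Measure.restrict_apply' hT, hν]
    exact measure_inter_lt_eq_setLIntegral_exp_neg hG hΦ hlaw hindep hA hB hB0 hBA hs
  have hG_inter : ∀ s, MeasurableSet[G] s → P.restrict T (s ∩ S) = ν (s ∩ S) := fun s hs => by
    rw [Measure.restrict_apply' hT, Set.inter_assoc, Set.inter_eq_right.mpr hTS, hν,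
      Set.inter_assoc, Set.inter_self, ← hν, ← Measure.restrict_apply' hT]
    exact hG_sets s hs
  have hSH : MeasurableSet[G ⊔ MeasurableSpace.generateFrom {S}] S :=
    le_sup_right (a := G) _ (MeasurableSpace.measurableSet_generateFrom rfl)
  have hGH : G ⊔ MeasurableSpace.generateFrom {S} ≤ mF :=
    sup_le hG (MeasurableSpace.generateFrom_le fun t ht => Set.mem_singleton_iff.mp ht ▸ hS)
  refine condExp_indicator_ae_eq_of_measure_inter_eq hGH hT
    ((measurable_const.indicator hSH).mul
      (Real.measurable_exp.comp ((hA.sub hB).neg.mono le_sup_left le_rfl)))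
    (fun ω => mul_nonneg (Set.indicator_nonneg (fun _ _ => zero_le_one) _) (Real.exp_nonneg _))
    fun t ht => ?_
  rw [← Measure.restrict_apply' hT, ← withDensity_apply']
  exact measure_eq_on_sup_generateFrom_singleton hG hS hG_sets hG_inter ht

/-- **Doubly stochastic survival probability given partial death information.**
`Φ` is exponential with rate 1, independent of the sub-σ-algebra `𝓖`, `A` is a
nonnegative `𝓖`-measurable random variable, `B` is `𝓖`-measurable with
`0 ≤ B ≤ A`, and `𝓗` is the σ-algebra generated by the event `{B < Φ}`.  Then
`E[1_{A < Φ} | 𝓖 ⊔ 𝓗] = 1_{B < Φ} · e^{-(A - B)}` almost surely. -/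
theorem survival_condexp_enlarged {Ω : Type*} {mF : MeasurableSpace Ω}
    (P : Measure Ω) [IsProbabilityMeasure P]
    (Φ : Ω → ℝ) (hΦ : Measurable Φ)
    (hlaw : ∀ s : ℝ, 0 ≤ s → P {ω | s < Φ ω} = ENNReal.ofReal (Real.exp (-s)))
    (G : MeasurableSpace Ω) (hG : G ≤ mF)
    (hindep : Indep (MeasurableSpace.comap Φ inferInstance) G P)
    (A : Ω → ℝ) (hA : Measurable[G] A) (hA0 : ∀ ω, 0 ≤ A ω)
    (B : Ω → ℝ) (hB : Measurable[G] B) (hB0 : ∀ ω, 0 ≤ B ω) (hBA : ∀ ω, B ω ≤ A ω)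
    (H : MeasurableSpace Ω)
    (hH : H = MeasurableSpace.generateFrom {{ω | B ω < Φ ω}}) :
    P[Set.indicator {ω | A ω < Φ ω} (fun _ => (1 : ℝ)) | G ⊔ H]
      =ᵐ[P] fun ω =>
        Set.indicator {ω | B ω < Φ ω} (fun _ => (1 : ℝ)) ω * Real.exp (-(A ω - B ω)) :=
  survival_condexp_enlarged_general P Φ hΦ hlaw G hG hindep A hA B hB hB0 hBA H hH
end

section
/- Let 𝓜 ⊆ 𝓖 be a further sub-σ-algebra of 𝓕 and let X : Ω → ℝ be a bounded 𝓖-measurable random variable. Then P-almost surely, E[X · 1_{{A < Φ}} | 𝓜] = E[X · e^{−A} | 𝓜]. (This is the computational core of the paper's Survival Benefit proposition: the time-t fair value of a time-T survival benefit C_T satisfies E[e^{−∫_t^T r_s ds} 1_{{τ>T}} C_T | 𝒢_t] = E[e^{−∫_t^T (r_s+μ_s) ds} C_T | 𝒢_t], with X the discounted benefit e^{−∫_t^T r_s ds} C_T and A = ∫_0^T μ_s ds.) -/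
/-!
Since `Φ` is independent of `𝓖`, the joint law of a `𝓖`-measurable `Z` and `Φ` is a product
measure, and Fubini lets one freeze `Z` when conditioning on `𝓖`:
`E[f(Z, Φ) | 𝓖] = E[f(z, Φ)]|_{z = Z}`. For `f(a, φ) = 1_{a < φ}` this gives
`E[1_{A < Φ} | 𝓖] = P(Φ > a)|_{a = A} = e^{-A}`. As `X` is `𝓖`-measurable it is pulled out of the
conditional expectation given `𝓖`, and the tower property passes to `𝓜 ⊆ 𝓖`.
-/

open MeasureTheory ProbabilityTheory Set

section Freezing

variable {Ω β γ : Type*} {mΩ : MeasurableSpace Ω} [MeasurableSpace β] [MeasurableSpace γ]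
  {P : Measure Ω} [IsProbabilityMeasure P] {Z : Ω → γ} {Φ : Ω → β} {f : γ × β → ℝ}

theorem integrable_prod_map_of_indepFun (hZ : Measurable Z) (hΦ : Measurable Φ)
    (hind : IndepFun Z Φ P) (hf : StronglyMeasurable f)
    (hfi : Integrable (fun ω => f (Z ω, Φ ω)) P) :
    Integrable f ((P.map Z).prod (P.map Φ)) := by
  rwa [← (indepFun_iff_map_prod_eq_prod_map_map hZ.aemeasurable hΦ.aemeasurable).mp hind,
    integrable_map_measure hf.aestronglyMeasurable (hZ.prodMk hΦ).aemeasurable]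

theorem integral_comp_prod_eq_integral_integral_of_indepFun (hZ : Measurable Z)
    (hΦ : Measurable Φ) (hind : IndepFun Z Φ P) (hf : StronglyMeasurable f)
    (hfi : Integrable (fun ω => f (Z ω, Φ ω)) P) :
    ∫ ω, f (Z ω, Φ ω) ∂P = ∫ ω, ∫ y, f (Z ω, y) ∂(P.map Φ) ∂P := by
  have hprod := integrable_prod_map_of_indepFun hZ hΦ hind hf hfi
  rw [← integral_map (hZ.prodMk hΦ).aemeasurable hf.aestronglyMeasurable,
    (indepFun_iff_map_prod_eq_prod_map_map hZ.aemeasurable hΦ.aemeasurable).mp hind,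
    integral_prod f hprod,
    integral_map hZ.aemeasurable hprod.integral_prod_left.aestronglyMeasurable]

theorem condExp_comp_prod_ae_eq_integral_of_indep (hΦ : Measurable Φ) {G : MeasurableSpace Ω}
    (hG : G ≤ mΩ) (hindep : Indep (MeasurableSpace.comap Φ inferInstance) G P)
    (hZ : Measurable[G] Z) (hf : StronglyMeasurable f)
    (hfi : Integrable (fun ω => f (Z ω, Φ ω)) P) :
    P[fun ω => f (Z ω, Φ ω) | G] =ᵐ[P] fun ω => ∫ ω', f (Z ω, Φ ω') ∂P := by
  -- otherwise `G`, bound later, is the ambient instance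
  let _ := mΩ
  have hZm : Measurable Z := hZ.mono hG le_rfl
  have hind : IndepFun Z Φ P := indep_of_indep_of_le_left hindep.symm hZ.comap_le
  have hmap (z : γ) : ∫ y, f (z, y) ∂(P.map Φ) = ∫ ω', f (z, Φ ω') ∂P :=
    integral_map hΦ.aemeasurable (hf.comp_measurable measurable_prodMk_left).aestronglyMeasurable
  simp_rw [← hmap]
  have hfrozen := (integrable_prod_map_of_indepFun hZm hΦ hind hf hfi).integral_prod_left
  refine (ae_eq_condExp_of_forall_setIntegral_eq hG hfi (fun s _ _ => ?_)
    (fun s hs _ => ?_) ?_).symm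
  · exact ((integrable_map_measure hfrozen.aestronglyMeasurable hZm.aemeasurable).mp
      hfrozen).integrableOn
  · -- pairing `Z` with `1_s` keeps it `G`-measurable, so the product formula applies to `1_s · f`
    have hsm : MeasurableSet[mΩ] s := hG s hs
    have hZs : Measurable[G] fun ω => (Z ω, s.indicator (1 : Ω → ℝ) ω) :=
      hZ.prodMk (measurable_const.indicator hs)
    have hweighted := integral_comp_prod_eq_integral_integral_of_indepFun (hZs.mono hG le_rfl) hΦ
      (indep_of_indep_of_le_left hindep.symm hZs.comap_le)
      (f := fun p => p.1.2 * f (p.1.1, p.2)) ?_ ?_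
    · rw [← integral_indicator hsm, ← integral_indicator hsm]
      convert hweighted.symm using 2 <;> funext ω <;> by_cases hω : ω ∈ s <;> simp [hω]
    · exact measurable_fst.snd.stronglyMeasurable.mul
        (hf.comp_measurable (measurable_fst.fst.prodMk measurable_snd))
    · exact hfi.bdd_mul (c := 1) (measurable_const.indicator hsm).aestronglyMeasurable
        (ae_of_all _ fun ω => by by_cases hω : ω ∈ s <;> simp [hω])
  · exact ((hf.integral_prod_right (f := fun z y => f (z, y))).comp_measurable
      hZ).aestronglyMeasurable

end Freezing

theorem condExp_indicator_lt_ae_eq_of_indep {Ω : Type*} {mΩ : MeasurableSpace Ω}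
    {P : Measure Ω} [IsProbabilityMeasure P] {Φ : Ω → ℝ} (hΦ : Measurable Φ)
    {G : MeasurableSpace Ω} (hG : G ≤ mΩ)
    (hindep : Indep (MeasurableSpace.comap Φ inferInstance) G P) {A : Ω → ℝ}
    (hA : Measurable[G] A) :
    P[{ω | A ω < Φ ω}.indicator fun _ => (1 : ℝ) | G]
      =ᵐ[P] fun ω => P.real {ω' | A ω < Φ ω'} := by
  have hlt : MeasurableSet {p : ℝ × ℝ | p.1 < p.2} :=
    measurableSet_lt measurable_fst measurable_snd
  have hfreeze := condExp_comp_prod_ae_eq_integral_of_indep hΦ hG hindep hA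
    ((stronglyMeasurable_const (b := (1 : ℝ))).indicator hlt)
    ((integrable_const (1 : ℝ)).indicator (measurableSet_lt (hA.mono hG le_rfl) hΦ))
  refine hfreeze.trans (ae_of_all _ fun ω => ?_)
  exact (integral_indicator_const 1 (measurableSet_lt measurable_const hΦ)).trans (mul_one _)

/-- **Survival benefit valuation (core computation).**
`Φ` is exponential with rate 1, independent of the sub-σ-algebra `𝓖`, `A` is a
nonnegative `𝓖`-measurable random variable, and `X` is a bounded `𝓖`-measurable
random variable.  For any further sub-σ-algebra `𝓜 ⊆ 𝓖`,
`E[X · 1_{A < Φ} | 𝓜] = E[X · e^{-A} | 𝓜]` almost surely. -/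
theorem survival_benefit_condexp {Ω : Type*} {mF : MeasurableSpace Ω}
    (P : Measure Ω) [IsProbabilityMeasure P]
    (Φ : Ω → ℝ) (hΦ : Measurable Φ)
    (hlaw : ∀ s : ℝ, 0 ≤ s → P {ω | s < Φ ω} = ENNReal.ofReal (Real.exp (-s)))
    (G : MeasurableSpace Ω) (hG : G ≤ mF)
    (hindep : Indep (MeasurableSpace.comap Φ inferInstance) G P)
    (A : Ω → ℝ) (hA : Measurable[G] A) (hA0 : ∀ ω, 0 ≤ A ω)
    (M : MeasurableSpace Ω) (hM : M ≤ G)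
    (X : Ω → ℝ) (hX : Measurable[G] X) (hXb : ∃ C : ℝ, ∀ ω, |X ω| ≤ C) :
    P[fun ω => X ω * Set.indicator {ω | A ω < Φ ω} (fun _ => (1 : ℝ)) ω | M]
      =ᵐ[P] P[fun ω => X ω * Real.exp (-A ω) | M] := by
  obtain ⟨C, hC⟩ := hXb
  have hsurv : P[{ω | A ω < Φ ω}.indicator fun _ => (1 : ℝ) | G]
      =ᵐ[P] fun ω => Real.exp (-A ω) := by
    filter_upwards [condExp_indicator_lt_ae_eq_of_indep hΦ hG hindep hA] with ω hω
    rw [hω, measureReal_def, hlaw _ (hA0 ω), ENNReal.toReal_ofReal (Real.exp_pos _).le]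
  have hint : Integrable ({ω | A ω < Φ ω}.indicator fun _ => (1 : ℝ)) P :=
    (integrable_const 1).indicator (measurableSet_lt (hA.mono hG le_rfl) hΦ)
  have hXint := hint.bdd_mul (hX.mono hG le_rfl).aestronglyMeasurable (ae_of_all _ hC)
  calc P[fun ω => X ω * Set.indicator {ω | A ω < Φ ω} (fun _ => (1 : ℝ)) ω | M]
      =ᵐ[P] P[P[fun ω => X ω * Set.indicator {ω | A ω < Φ ω} (fun _ => (1 : ℝ)) ω | G] | M] :=
        (condExp_condExp_of_le hM hG).symm
    _ =ᵐ[P] P[fun ω => X ω * Real.exp (-A ω) | M] := condExp_congr_ae <|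
        (condExp_mul_of_stronglyMeasurable_left hX.stronglyMeasurable hXint hint).trans
          (hsurv.mono fun ω hω => congrArg (X ω * ·) hω)
end

section
/- Let S_1, …, S_m : Ω → ℝ be integrable random variables with S_i > 0 almost surely for each i. Define the arithmetic mean A = (1/m) Σ_{i=1}^m S_i and the geometric mean G = (Π_{i=1}^m S_i)^{1/m}. Then G is integrable and for every K' ∈ ℝ: E[(A − K')⁺] ≤ E[(G − K')⁺] + E[A] − E[G]. (This is the paper's arithmetic-geometric mean upper bound for the GAO: C(0,x,T) ≤ g (n−1) P̃(0,T) ( Ẽ[(G_T^{(n−1)} − K')⁺] + Ẽ[A_T^{(n−1)}] − Ẽ[G_T^{(n−1)}] ) =: GAOUB.) -/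
/-!
By AM–GM, `0 ≤ G ≤ A` almost surely, which makes `G` integrable. Since `x ↦ (x - K')⁺` is
nondecreasing and 1-Lipschitz, `(A - K')⁺ ≤ (G - K')⁺ + (A - G)` pointwise, and integrating
gives the bound.
-/

open MeasureTheory Finset

theorem max_sub_zero_le_add_sub {a b : ℝ} (K : ℝ) (hba : b ≤ a) :
    max (a - K) 0 ≤ max (b - K) 0 + (a - b) :=
  max_le (by linarith [le_max_left (b - K) 0]) (by linarith [le_max_right (b - K) 0])

theorem integral_max_sub_zero_le_of_ae_le {Ω : Type*} {mΩ : MeasurableSpace Ω} {μ : Measure Ω}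
    [IsFiniteMeasure μ] {f g : Ω → ℝ} (hf : Integrable f μ) (hg : Integrable g μ)
    (hfg : f ≤ᵐ[μ] g) (K : ℝ) :
    ∫ ω, max (g ω - K) 0 ∂μ
      ≤ (∫ ω, max (f ω - K) 0 ∂μ) + (∫ ω, g ω ∂μ) - ∫ ω, f ω ∂μ := by
  have hf_call : Integrable (fun ω => max (f ω - K) 0) μ :=
    (hf.sub (integrable_const K)).pos_part
  have hgf : Integrable (fun ω => g ω - f ω) μ := hg.sub hf
  calc ∫ ω, max (g ω - K) 0 ∂μ
      ≤ ∫ ω, max (f ω - K) 0 + (g ω - f ω) ∂μ := by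
        refine integral_mono_ae (hg.sub (integrable_const K)).pos_part (hf_call.add hgf) ?_
        filter_upwards [hfg] with ω hω using max_sub_zero_le_add_sub K hω
    _ = (∫ ω, max (f ω - K) 0 ∂μ) + (∫ ω, g ω ∂μ) - ∫ ω, f ω ∂μ := by
        rw [integral_add hf_call hgf, integral_sub hg hf]
        ring

theorem Real.geom_mean_le_arith_mean_of_nonneg {ι : Type*} {s : Finset ι} (hs : s.Nonempty)
    {z : ι → ℝ} (hz : ∀ i ∈ s, 0 ≤ z i) :
    (∏ i ∈ s, z i) ^ ((1 : ℝ) / #s) ≤ (∑ i ∈ s, z i) / #s := by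
  simpa [one_div] using
    Real.geom_mean_le_arith_mean s 1 z (fun _ _ => zero_le_one) (by simpa using hs) hz

/-- **Arithmetic–geometric mean upper bound for the GAO.**
Let `S_1, …, S_m` be integrable and a.s. positive, `A` their arithmetic mean and `G`
their geometric mean.  Then `G` is integrable and for every strike `K'`,
`E[(A − K')⁺] ≤ E[(G − K')⁺] + E[A] − E[G]`. -/
theorem gao_am_gm_upper_bound {Ω : Type*} {mF : MeasurableSpace Ω}
    (P : Measure Ω) [IsProbabilityMeasure P]
    (m : ℕ) (hm : 1 ≤ m) (S : Fin m → Ω → ℝ) (hS : ∀ i, Integrable (S i) P)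
    (hSpos : ∀ i, ∀ᵐ ω ∂P, 0 < S i ω)
    (A G : Ω → ℝ)
    (hA : A = fun ω => (∑ i, S i ω) / m)
    (hG : G = fun ω => (∏ i, S i ω) ^ ((1 : ℝ) / m)) :
    Integrable G P ∧ ∀ K' : ℝ,
      ∫ ω, max (A ω - K') 0 ∂P
        ≤ (∫ ω, max (G ω - K') 0 ∂P) + (∫ ω, A ω ∂P) - ∫ ω, G ω ∂P := by
  have hpos : ∀ᵐ ω ∂P, ∀ i, 0 < S i ω := ae_all_iff.2 hSpos
  have hA_int : Integrable A P := hA ▸ (integrable_finsetSum _ fun i _ => hS i).div_const _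
  have hG_meas : AEStronglyMeasurable G P := hG ▸
    ((Finset.aemeasurable_fun_prod _ fun i _ => (hS i).aemeasurable).pow
      aemeasurable_const).aestronglyMeasurable
  have hG_nonneg : 0 ≤ᵐ[P] G := by
    filter_upwards [hpos] with ω hω
    exact hG ▸ Real.rpow_nonneg (prod_nonneg fun i _ => (hω i).le) _
  have hGA : G ≤ᵐ[P] A := by
    filter_upwards [hpos] with ω hω
    simpa [hA, hG] using Real.geom_mean_le_arith_mean_of_nonneg (s := univ)
      ⟨⟨0, hm⟩, mem_univ _⟩ fun i _ => (hω i).le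
  have hG_int : Integrable G P :=
    integrable_of_le_of_le hG_meas hG_nonneg hGA (integrable_zero _ _ P) hA_int
  exact ⟨hG_int, integral_max_sub_zero_le_of_ae_le hG_int hA_int hGA⟩
end

section
/- For every η ∈ ℝ, the function k ↦ e^{(δ + iη)k} · E[e^Y 1_{{Y ≥ k}}] is integrable on ℝ (with respect to Lebesgue measure, as a ℂ-valued function) and ∫_ℝ e^{(δ + iη)k} E[e^Y 1_{{Y ≥ k}}] dk = E[e^{(δ + 1 + iη) Y}] / (δ + iη). (This is the computation of Ψ_T^{G_1} in the proof of the paper's Fourier-pricing proposition, with k = ln K'.) -/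
/-!
Write `E[e^Y 1_{Y ≥ k}]` as an integral over `Ω` and swap the two integrals (Fubini).
For fixed `ω` the inner integral is `∫_{-∞}^{Y ω} e^{ck} dk = e^{c Y ω} / c`
with `c = δ + iη`, which gives `E[e^{(c+1)Y}] / c`. Absolute integrability on `ℝ × Ω`
holds because `|e^{ck}| = e^{δk}`, so the same computation with `δ` in place of `c` bounds
the absolute integral by `E[e^{(δ+1)Y}] / δ`.
-/

open MeasureTheory Complex

open Set

section LayerCake

variable {Ω : Type*} {mΩ : MeasurableSpace Ω} {P : Measure Ω} {Y : Ω → ℝ}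
  {φ : ℝ → ℂ} {F : Ω → ℂ}

lemma indicator_le_prod_eq_indicator_Iic (f : ℝ × Ω → ℂ) (k : ℝ) (ω : Ω) :
    {p : ℝ × Ω | p.1 ≤ Y p.2}.indicator f (k, ω)
      = (Iic (Y ω)).indicator (fun k => f (k, ω)) k :=
  rfl

lemma indicator_le_prod_eq_indicator_setOf (f : ℝ × Ω → ℂ) (k : ℝ) (ω : Ω) :
    {p : ℝ × Ω | p.1 ≤ Y p.2}.indicator f (k, ω)
      = {ω | k ≤ Y ω}.indicator (fun ω => f (k, ω)) ω :=
  rfl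

variable [SFinite P]

lemma integrable_indicator_le_prod (hY : Measurable Y) (hφ : AEStronglyMeasurable φ volume)
    (hF : AEStronglyMeasurable F P) (hφY : ∀ ω, IntegrableOn φ (Iic (Y ω)))
    (hint : Integrable (fun ω => (∫ k in Iic (Y ω), ‖φ k‖) * ‖F ω‖) P) :
    Integrable ({p : ℝ × Ω | p.1 ≤ Y p.2}.indicator fun p => φ p.1 * F p.2)
      (volume.prod P) := by
  have hS : MeasurableSet {p : ℝ × Ω | p.1 ≤ Y p.2} :=
    measurableSet_le measurable_fst (hY.comp measurable_snd)
  have hm : AEStronglyMeasurable (fun p : ℝ × Ω => φ p.1 * F p.2) (volume.prod P) :=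
    hφ.comp_fst.mul hF.comp_snd
  refine (integrable_prod_iff' (hm.indicator hS)).2 ⟨.of_forall fun ω => ?_, ?_⟩
  · simp only [indicator_le_prod_eq_indicator_Iic]
    exact IntegrableOn.integrable_indicator ((hφY ω).mul_const (F ω)) measurableSet_Iic
  · refine hint.congr (.of_forall fun ω => ?_)
    simp only [indicator_le_prod_eq_indicator_Iic, norm_indicator_eq_indicator_norm,
      integral_indicator measurableSet_Iic, norm_mul, integral_mul_const]

theorem integrable_and_integral_mul_setIntegral_le (hY : Measurable Y)
    (hφ : AEStronglyMeasurable φ volume) (hF : AEStronglyMeasurable F P)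
    (hφY : ∀ ω, IntegrableOn φ (Iic (Y ω)))
    (hint : Integrable (fun ω => (∫ k in Iic (Y ω), ‖φ k‖) * ‖F ω‖) P) :
    Integrable (fun k => φ k * ∫ ω in {ω | k ≤ Y ω}, F ω ∂P) ∧
      ∫ k, φ k * ∫ ω in {ω | k ≤ Y ω}, F ω ∂P
        = ∫ ω, (∫ k in Iic (Y ω), φ k) * F ω ∂P := by
  set K := {p : ℝ × Ω | p.1 ≤ Y p.2}.indicator fun p => φ p.1 * F p.2
  have hK : Integrable K (volume.prod P) := integrable_indicator_le_prod hY hφ hF hφY hint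
  have hleft (k : ℝ) :
      ∫ ω, K (k, ω) ∂P = φ k * ∫ ω in {ω | k ≤ Y ω}, F ω ∂P := by
    simp only [K, indicator_le_prod_eq_indicator_setOf]
    rw [integral_indicator (measurableSet_le measurable_const hY), integral_const_mul]
  have hright (ω : Ω) : ∫ k, K (k, ω) = (∫ k in Iic (Y ω), φ k) * F ω := by
    simp only [K, indicator_le_prod_eq_indicator_Iic, integral_indicator measurableSet_Iic,
      integral_mul_const]
  refine ⟨hK.integral_prod_left.congr (.of_forall hleft), ?_⟩
  simp only [← hleft, ← hright]
  exact integral_integral_swap hK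

theorem integrable_and_integral_cexp_mul_setIntegral_le {c : ℂ} (hc : 0 < c.re)
    (hY : Measurable Y) (hF : AEStronglyMeasurable F P)
    (hint : Integrable (fun ω => Real.exp (c.re * Y ω) * ‖F ω‖) P) :
    Integrable (fun k : ℝ => cexp (c * k) * ∫ ω in {ω | k ≤ Y ω}, F ω ∂P) ∧
      ∫ k : ℝ, cexp (c * k) * ∫ ω in {ω | k ≤ Y ω}, F ω ∂P
        = (∫ ω, cexp (c * Y ω) * F ω ∂P) / c := by
  have hnorm (b : ℝ) : ∫ k in Iic b, ‖cexp (c * k)‖ = Real.exp (c.re * b) / c.re := by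
    simp only [norm_exp, mul_re, ofReal_re, ofReal_im, mul_zero, sub_zero]
    exact integral_exp_mul_Iic hc b
  obtain ⟨hintegrable, hintegral⟩ :=
    integrable_and_integral_mul_setIntegral_le (φ := fun k : ℝ => cexp (c * k)) hY
      (by fun_prop : Continuous fun k : ℝ => cexp (c * k)).aestronglyMeasurable hF
      (fun ω => integrableOn_exp_mul_complex_Iic hc _)
      (by simpa only [hnorm, div_mul_eq_mul_div] using hint.div_const c.re)
  refine ⟨hintegrable, hintegral.trans ?_⟩
  simp only [integral_exp_mul_complex_Iic hc, div_mul_eq_mul_div, integral_div]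

end LayerCake

/-- **Computation of Ψ_T^{G₁} in the Fourier pricing proposition.**
If `E[e^{(δ+1)Y}] < ∞` with `δ > 0`, then for every `η ∈ ℝ` the function
`k ↦ e^{(δ+iη)k} E[e^Y 1_{Y ≥ k}]` is Lebesgue-integrable on `ℝ` and its integral
equals `E[e^{(δ+1+iη)Y}] / (δ + iη)`. -/
theorem fourier_psi_G1 {Ω : Type*} {mF : MeasurableSpace Ω}
    (P : Measure Ω) [IsProbabilityMeasure P]
    (Y : Ω → ℝ) (hY : Measurable Y) (δ : ℝ) (hδ : 0 < δ)
    (hint : Integrable (fun ω => Real.exp ((δ + 1) * Y ω)) P) (η : ℝ) :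
    Integrable (fun k : ℝ => Complex.exp (((δ : ℂ) + η * Complex.I) * k) *
        ((∫ ω in {ω | k ≤ Y ω}, Real.exp (Y ω) ∂P : ℝ) : ℂ)) ∧
      ∫ k : ℝ, Complex.exp (((δ : ℂ) + η * Complex.I) * k) *
          ((∫ ω in {ω | k ≤ Y ω}, Real.exp (Y ω) ∂P : ℝ) : ℂ)
        = (∫ ω, Complex.exp (((δ : ℂ) + 1 + η * Complex.I) * Y ω) ∂P)
            / ((δ : ℂ) + η * Complex.I) := by
  have hc : ((δ : ℂ) + η * I).re = δ := by simp
  have hexp (ω : Ω) :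
      cexp ((δ + η * I) * Y ω) * (Real.exp (Y ω) : ℂ) = cexp ((δ + 1 + η * I) * Y ω) := by
    rw [ofReal_exp, ← Complex.exp_add]
    ring_nf
  have hnorm (ω : Ω) : Real.exp ((δ + 1) * Y ω)
      = Real.exp (((δ : ℂ) + η * I).re * Y ω) * ‖(Real.exp (Y ω) : ℂ)‖ := by
    rw [hc, norm_real, Real.norm_of_nonneg (Real.exp_pos _).le, ← Real.exp_add]
    ring_nf
  obtain ⟨hintegrable, hintegral⟩ :=
    integrable_and_integral_cexp_mul_setIntegral_le (hc.symm ▸ hδ) hY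
      (by fun_prop : Measurable fun ω => (Real.exp (Y ω) : ℂ)).aestronglyMeasurable
      (hint.congr (.of_forall hnorm))
  simp only [integral_complex_ofReal, hexp] at hintegrable hintegral
  exact ⟨hintegrable, hintegral⟩
end

section
/- For every η ∈ ℝ, the function k ↦ e^{(δ + iη)k} · e^k · P(Y ≥ k) is integrable on ℝ (with respect to Lebesgue measure, as a ℂ-valued function) and ∫_ℝ e^{(δ + iη)k} e^k P(Y ≥ k) dk = E[e^{(δ + 1 + iη) Y}] / (δ + 1 + iη). (This is the computation of Ψ_T^{G_2} in the proof of the paper's Fourier-pricing proposition, with k = ln K'.) -/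
/-!
Write `P(Y ≥ k) = ∫ 1_{k ≤ Y} dP` and swap the two integrals (Fubini–Tonelli on `ℝ × Ω`):
the inner integral becomes `∫_{-∞}^{Y} e^{zk} dk = e^{zY} / z` with `z = δ + 1 + iη`, and the
absolute integrand integrates to `E[e^{(δ+1)Y}] / (δ + 1) < ∞`, which justifies the swap.
-/

open MeasureTheory Complex Set

lemma indicator_le_prodMk_right {Ω M : Type*} [Zero M] {Y : Ω → ℝ} {g : ℝ → M} (ω : Ω) :
    (fun k => {p : ℝ × Ω | p.1 ≤ Y p.2}.indicator (fun p => g p.1) (k, ω)) =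
      (Iic (Y ω)).indicator g := by
  ext k
  by_cases h : k ≤ Y ω <;> simp [h]

section LayerCake

variable {Ω E : Type*} [MeasurableSpace Ω] {P : Measure Ω} {μ : Measure ℝ}
  [NormedAddCommGroup E] {Y : Ω → ℝ} {g : ℝ → E}

lemma integral_indicator_le_prodMk_left [NormedSpace ℝ E] [CompleteSpace E] (hY : Measurable Y)
    (k : ℝ) :
    ∫ ω, {p : ℝ × Ω | p.1 ≤ Y p.2}.indicator (fun p => g p.1) (k, ω) ∂P =
      P.real {ω | k ≤ Y ω} • g k := by
  have hslice : (fun ω => {p : ℝ × Ω | p.1 ≤ Y p.2}.indicator (fun p => g p.1) (k, ω)) =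
      {ω | k ≤ Y ω}.indicator (fun _ => g k) := by
    ext ω
    by_cases h : k ≤ Y ω <;> simp [h]
  rw [hslice, integral_indicator_const _ (measurableSet_le measurable_const hY)]

variable [SFinite μ] [SFinite P]

lemma integrable_indicator_le (hY : Measurable Y) (hg : AEStronglyMeasurable g μ)
    (hgY : ∀ ω, IntegrableOn g (Iic (Y ω)) μ)
    (hint : Integrable (fun ω => ∫ k in Iic (Y ω), ‖g k‖ ∂μ) P) :
    Integrable ({p : ℝ × Ω | p.1 ≤ Y p.2}.indicator (fun p => g p.1)) (μ.prod P) := by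
  have hS : MeasurableSet {p : ℝ × Ω | p.1 ≤ Y p.2} :=
    measurableSet_le measurable_fst (hY.comp measurable_snd)
  refine (integrable_prod_iff' ((hg.comp_fst (ν := P)).indicator hS)).2 ⟨?_, ?_⟩
  · filter_upwards with ω
    rw [indicator_le_prodMk_right, integrable_indicator_iff measurableSet_Iic]
    exact hgY ω
  · refine hint.congr (Filter.Eventually.of_forall fun ω => ?_)
    simp only [norm_indicator_eq_indicator_norm]
    rw [indicator_le_prodMk_right (g := fun k => ‖g k‖), integral_indicator measurableSet_Iic]

variable [NormedSpace ℝ E] [CompleteSpace E]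

theorem integrable_measureReal_le_smul (hY : Measurable Y) (hg : AEStronglyMeasurable g μ)
    (hgY : ∀ ω, IntegrableOn g (Iic (Y ω)) μ)
    (hint : Integrable (fun ω => ∫ k in Iic (Y ω), ‖g k‖ ∂μ) P) :
    Integrable (fun k => P.real {ω | k ≤ Y ω} • g k) μ := by
  simpa only [integral_indicator_le_prodMk_left hY] using
    (integrable_indicator_le hY hg hgY hint).integral_prod_left

theorem integral_measureReal_le_smul (hY : Measurable Y) (hg : AEStronglyMeasurable g μ)
    (hgY : ∀ ω, IntegrableOn g (Iic (Y ω)) μ)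
    (hint : Integrable (fun ω => ∫ k in Iic (Y ω), ‖g k‖ ∂μ) P) :
    ∫ k, P.real {ω | k ≤ Y ω} • g k ∂μ = ∫ ω, ∫ k in Iic (Y ω), g k ∂μ ∂P := calc
  _ = ∫ k, ∫ ω, {p : ℝ × Ω | p.1 ≤ Y p.2}.indicator (fun p => g p.1) (k, ω) ∂P ∂μ := by
    simp only [integral_indicator_le_prodMk_left hY]
  _ = ∫ ω, ∫ k, {p : ℝ × Ω | p.1 ≤ Y p.2}.indicator (fun p => g p.1) (k, ω) ∂μ ∂P :=
    integral_integral_swap (integrable_indicator_le hY hg hgY hint)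
  _ = _ := by
    simp only [indicator_le_prodMk_right, integral_indicator measurableSet_Iic]

end LayerCake

lemma integral_norm_cexp_mul_Iic {z : ℂ} (hz : 0 < z.re) (y : ℝ) :
    ∫ k in Iic y, ‖cexp (z * k)‖ = Real.exp (z.re * y) / z.re := by
  simp only [norm_exp, re_mul_ofReal, integral_exp_mul_Iic hz]

theorem integrable_and_integral_measureReal_le_smul_cexp {Ω : Type*} [MeasurableSpace Ω]
    {P : Measure Ω} [SFinite P] {Y : Ω → ℝ} (hY : Measurable Y) {z : ℂ} (hz : 0 < z.re)
    (hint : Integrable (fun ω => Real.exp (z.re * Y ω)) P) :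
    Integrable (fun k : ℝ => P.real {ω | k ≤ Y ω} • cexp (z * k)) ∧
      ∫ k : ℝ, P.real {ω | k ≤ Y ω} • cexp (z * k) = (∫ ω, cexp (z * Y ω) ∂P) / z := by
  have hg : AEStronglyMeasurable (fun k : ℝ => cexp (z * k)) :=
    (by fun_prop : Continuous fun k : ℝ => cexp (z * k)).aestronglyMeasurable
  have hgY (ω : Ω) := integrableOn_exp_mul_complex_Iic hz (Y ω)
  have hnorm : Integrable (fun ω => ∫ k in Iic (Y ω), ‖cexp (z * k)‖) P := by
    simpa only [integral_norm_cexp_mul_Iic hz] using hint.div_const z.re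
  refine ⟨integrable_measureReal_le_smul hY hg hgY hnorm, ?_⟩
  rw [integral_measureReal_le_smul hY hg hgY hnorm]
  simp only [integral_exp_mul_complex_Iic hz, integral_div]

/-- **Computation of Ψ_T^{G₂} in the Fourier pricing proposition.**
If `E[e^{(δ+1)Y}] < ∞` with `δ > 0`, then for every `η ∈ ℝ` the function
`k ↦ e^{(δ+iη)k} e^k P(Y ≥ k)` is Lebesgue-integrable on `ℝ` and its integral
equals `E[e^{(δ+1+iη)Y}] / (δ + 1 + iη)`. -/
theorem fourier_psi_G2 {Ω : Type*} {mF : MeasurableSpace Ω}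
    (P : Measure Ω) [IsProbabilityMeasure P]
    (Y : Ω → ℝ) (hY : Measurable Y) (δ : ℝ) (hδ : 0 < δ)
    (hint : Integrable (fun ω => Real.exp ((δ + 1) * Y ω)) P) (η : ℝ) :
    Integrable (fun k : ℝ => Complex.exp (((δ : ℂ) + η * Complex.I) * k) *
        (Real.exp k : ℂ) * ((P {ω | k ≤ Y ω}).toReal : ℂ)) ∧
      ∫ k : ℝ, Complex.exp (((δ : ℂ) + η * Complex.I) * k) *
          (Real.exp k : ℂ) * ((P {ω | k ≤ Y ω}).toReal : ℂ)
        = (∫ ω, Complex.exp (((δ : ℂ) + 1 + η * Complex.I) * Y ω) ∂P)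
            / ((δ : ℂ) + 1 + η * Complex.I) := by
  have hz : (δ + 1 + η * I : ℂ).re = δ + 1 := by simp
  have hintegrand : (fun k : ℝ => cexp ((δ + η * I) * k) * (Real.exp k : ℂ) *
      ((P {ω | k ≤ Y ω}).toReal : ℂ)) =
        fun k => P.real {ω | k ≤ Y ω} • cexp ((δ + 1 + η * I) * k) := by
    ext k
    rw [ofReal_exp, ← exp_add, real_smul, measureReal_def, mul_comm]
    ring_nf
  rw [hintegrand]
  exact integrable_and_integral_measureReal_le_smul_cexp hY (by linarith) (hz ▸ hint)
end

section
/- For every η ∈ ℝ, the function k ↦ e^{(δ + iη)k} · E[(e^Y − e^k)⁺] is integrable on ℝ (with respect to Lebesgue measure, as a ℂ-valued function) and ∫_ℝ e^{(δ + iη)k} E[(e^Y − e^k)⁺] dk = E[e^{(δ + 1 + iη) Y}] / ((δ + iη)(δ + 1 + iη)). (This is the paper's formula for the damped Fourier transform Ψ_T^G(η; δ) of the geometric-basket call price E[(G_T^{(n−1)} − K')⁺] with respect to k = ln K', whose denominator δ² + δ − η² + iη(2δ+1) factors as (δ + iη)(δ + 1 + iη).) -/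
open MeasureTheory Complex

/-!
Writing `E[(e^Y - e^k)⁺]` as an integral over `Ω` and exchanging the order of integration
reduces the claim to the elementary identity
`∫_{-∞}^{y} e^{zk} (e^y - e^k) dk = e^{(z+1)y} / (z (z+1))` for `Re z > 0`.
The case `z = δ` of the same identity computes the integral of the absolute value, so
`E[e^{(δ+1)Y}] < ∞` is exactly what makes Fubini applicable.
-/

open Set

lemma cexp_mul_max_exp_sub_exp_eq_indicator (z : ℂ) (y k : ℝ) :
    cexp (z * k) * ((max (Real.exp y - Real.exp k) 0 : ℝ) : ℂ) =
      (Iic y).indicator (fun k : ℝ => Real.exp y * cexp (z * k) - cexp ((z + 1) * k)) k := by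
  rcases le_or_gt k y with h | h
  · rw [indicator_of_mem (mem_Iic.mpr h), max_eq_left (sub_nonneg.mpr (Real.exp_le_exp.mpr h)),
      add_one_mul, Complex.exp_add]
    push_cast
    ring
  · rw [indicator_of_notMem (notMem_Iic.mpr h),
      max_eq_right (sub_nonpos.mpr (Real.exp_le_exp.mpr h.le))]
    simp

lemma integrable_cexp_mul_max_exp_sub_exp {z : ℂ} (hz : 0 < z.re) (y : ℝ) :
    Integrable (fun k : ℝ => cexp (z * k) * ((max (Real.exp y - Real.exp k) 0 : ℝ) : ℂ)) := by
  have hz1 : 0 < (z + 1).re := by rw [add_re, one_re]; linarith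
  simp_rw [cexp_mul_max_exp_sub_exp_eq_indicator, integrable_indicator_iff measurableSet_Iic]
  exact ((integrableOn_exp_mul_complex_Iic hz y).const_mul _).sub
    (integrableOn_exp_mul_complex_Iic hz1 y)

lemma integral_cexp_mul_max_exp_sub_exp {z : ℂ} (hz : 0 < z.re) (y : ℝ) :
    ∫ k : ℝ, cexp (z * k) * ((max (Real.exp y - Real.exp k) 0 : ℝ) : ℂ) =
      cexp ((z + 1) * y) / (z * (z + 1)) := by
  have hz1 : 0 < (z + 1).re := by rw [add_re, one_re]; linarith
  have hz0 : z ≠ 0 := fun h => by simp [h] at hz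
  have hz10 : z + 1 ≠ 0 := fun h => by simp [h] at hz1
  simp_rw [cexp_mul_max_exp_sub_exp_eq_indicator, integral_indicator measurableSet_Iic]
  rw [integral_sub ((integrableOn_exp_mul_complex_Iic hz y).const_mul _)
      (integrableOn_exp_mul_complex_Iic hz1 y), integral_const_mul,
    integral_exp_mul_complex_Iic hz, integral_exp_mul_complex_Iic hz1, add_one_mul,
    Complex.exp_add]
  push_cast
  field_simp
  ring

lemma integral_exp_mul_max_exp_sub_exp {c : ℝ} (hc : 0 < c) (y : ℝ) :
    ∫ k : ℝ, Real.exp (c * k) * max (Real.exp y - Real.exp k) 0 =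
      Real.exp ((c + 1) * y) / (c * (c + 1)) := by
  apply ofReal_injective
  rw [← integral_complex_ofReal]
  push_cast
  exact integral_cexp_mul_max_exp_sub_exp (by simpa using hc) y

section Fubini

variable {Ω : Type*} [MeasurableSpace Ω] {P : Measure Ω} {Y : Ω → ℝ} {z : ℂ}

lemma integrable_prod_cexp_mul_max_exp_sub_exp (hz : 0 < z.re) (hY : Measurable Y)
    (hint : Integrable (fun ω => Real.exp ((z.re + 1) * Y ω)) P) :
    Integrable (fun p : Ω × ℝ =>
      cexp (z * p.2) * ((max (Real.exp (Y p.1) - Real.exp p.2) 0 : ℝ) : ℂ)) (P.prod volume) := by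
  have hmeas : Measurable fun p : Ω × ℝ =>
      cexp (z * p.2) * ((max (Real.exp (Y p.1) - Real.exp p.2) 0 : ℝ) : ℂ) := by
    fun_prop
  refine (integrable_prod_iff hmeas.aestronglyMeasurable).mpr
    ⟨.of_forall fun ω => integrable_cexp_mul_max_exp_sub_exp hz (Y ω), ?_⟩
  have hnorm : ∀ ω (k : ℝ), ‖cexp (z * k) * ((max (Real.exp (Y ω) - Real.exp k) 0 : ℝ) : ℂ)‖ =
      Real.exp (z.re * k) * max (Real.exp (Y ω) - Real.exp k) 0 := fun ω k => by
    rw [norm_mul, norm_exp, re_mul_ofReal, norm_real, Real.norm_of_nonneg (le_max_right _ _)]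
  simp_rw [hnorm, integral_exp_mul_max_exp_sub_exp hz]
  exact hint.div_const _

lemma integral_cexp_mul_integral_max_exp_sub_exp [SFinite P] (hz : 0 < z.re) (hY : Measurable Y)
    (hint : Integrable (fun ω => Real.exp ((z.re + 1) * Y ω)) P) :
    Integrable (fun k : ℝ =>
        cexp (z * k) * ((∫ ω, max (Real.exp (Y ω) - Real.exp k) 0 ∂P : ℝ) : ℂ)) ∧
      ∫ k : ℝ, cexp (z * k) * ((∫ ω, max (Real.exp (Y ω) - Real.exp k) 0 ∂P : ℝ) : ℂ) =
        (∫ ω, cexp ((z + 1) * Y ω) ∂P) / (z * (z + 1)) := by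
  have hF := integrable_prod_cexp_mul_max_exp_sub_exp hz hY hint
  have hinner : ∀ k : ℝ,
      cexp (z * k) * ((∫ ω, max (Real.exp (Y ω) - Real.exp k) 0 ∂P : ℝ) : ℂ) =
      ∫ ω, cexp (z * k) * ((max (Real.exp (Y ω) - Real.exp k) 0 : ℝ) : ℂ) ∂P := fun k => by
    rw [integral_const_mul, integral_complex_ofReal]
  simp_rw [hinner]
  refine ⟨hF.integral_prod_right, ?_⟩
  rw [← integral_integral_swap hF]
  simp_rw [integral_cexp_mul_max_exp_sub_exp hz]
  exact integral_div _ _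

end Fubini

/-- **Damped Fourier transform of the geometric-basket call price.**
If `E[e^{(δ+1)Y}] < ∞` with `δ > 0`, then for every `η ∈ ℝ` the function
`k ↦ e^{(δ+iη)k} E[(e^Y − e^k)⁺]` is Lebesgue-integrable on `ℝ` and its integral
equals `E[e^{(δ+1+iη)Y}] / ((δ + iη)(δ + 1 + iη))`. -/
theorem fourier_psi_G {Ω : Type*} {mF : MeasurableSpace Ω}
    (P : Measure Ω) [IsProbabilityMeasure P]
    (Y : Ω → ℝ) (hY : Measurable Y) (δ : ℝ) (hδ : 0 < δ)
    (hint : Integrable (fun ω => Real.exp ((δ + 1) * Y ω)) P) (η : ℝ) :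
    Integrable (fun k : ℝ => Complex.exp (((δ : ℂ) + η * Complex.I) * k) *
        ((∫ ω, max (Real.exp (Y ω) - Real.exp k) 0 ∂P : ℝ) : ℂ)) ∧
      ∫ k : ℝ, Complex.exp (((δ : ℂ) + η * Complex.I) * k) *
          ((∫ ω, max (Real.exp (Y ω) - Real.exp k) 0 ∂P : ℝ) : ℂ)
        = (∫ ω, Complex.exp (((δ : ℂ) + 1 + η * Complex.I) * Y ω) ∂P)
            / (((δ : ℂ) + η * Complex.I) * ((δ : ℂ) + 1 + η * Complex.I)) := by
  rw [show (δ : ℂ) + 1 + η * I = δ + η * I + 1 by ring]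
  exact integral_cexp_mul_integral_max_exp_sub_exp (by simpa using hδ) hY (by simpa using hint)
end

section
/- Assume in addition that the function η ↦ E[e^{(δ + 1 + iη) Y}] / ((δ + iη)(δ + 1 + iη)) is integrable on ℝ. Then for every K > 0: E[(e^Y − K)⁺] = (K^{−δ} / (2π)) ∫_ℝ e^{−iη ln K} · E[e^{(δ + 1 + iη) Y}] / ((δ + iη)(δ + 1 + iη)) dη, where the left-hand side is regarded as a complex number via the real-to-complex coercion. (This is the paper's Fourier-inversion pricing formula E[(G_T^{(n−1)} − K')⁺] = (e^{−δ ln K'}/π) ∫_0^∞ e^{−iη ln K'} Ψ_T^G(η; δ) dη, written as an integral over the whole real line.) -/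
/-!
The damped payoff `g(x) = e^{-(δ+1)x} (e^x - 1)⁺ = 1_{x > 0} (e^{-δx} - e^{-(δ+1)x})` is integrable,
with Fourier transform `1 / ((δ + iη)(δ + 1 + iη))` in the angular frequency `η`, which is again
integrable; Fourier inversion therefore gives
`∫ e^{iηx} / ((δ + iη)(δ + 1 + iη)) dη = 2π g(x)`. Since `e^{(δ+1)y} g(y - ln K) = K^δ (e^y - K)⁺`,
taking `y = Y` and integrating against `P` yields the formula once the two integrals are exchanged,
which Fubini allows because the integrand is bounded by `e^{(δ+1)Y} / (δ² + η²)`.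
-/

open MeasureTheory Complex Set
open scoped Real FourierTransform

theorem integrable_inv_sq_add_sq {c : ℝ} (hc : c ≠ 0) :
    Integrable fun x : ℝ => (c ^ 2 + x ^ 2)⁻¹ := by
  refine ((integrable_inv_one_add_sq.comp_div hc).const_mul (c ^ 2)⁻¹).congr ?_
  filter_upwards with x
  field_simp

theorem aemeasurable_of_aemeasurable_exp_const_mul {Ω : Type*} {_ : MeasurableSpace Ω}
    {μ : Measure Ω} {Y : Ω → ℝ} {c : ℝ} (hc : c ≠ 0)
    (h : AEMeasurable (fun ω => Real.exp (c * Y ω)) μ) : AEMeasurable Y μ := by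
  refine ((Real.measurable_log.comp_aemeasurable h).div_const c).congr ?_
  filter_upwards with ω
  simp [hc]

noncomputable def dampedCallPayoff (δ x : ℝ) : ℝ :=
  Real.exp (-((δ + 1) * x)) * max (Real.exp x - 1) 0

noncomputable def dampedDenom (δ η : ℝ) : ℂ :=
  ((δ : ℂ) + η * I) * ((δ : ℂ) + 1 + η * I)

section DampedCallPayoff

variable {δ : ℝ}

theorem continuous_dampedCallPayoff (δ : ℝ) : Continuous (dampedCallPayoff δ) := by
  unfold dampedCallPayoff
  fun_prop

theorem dampedCallPayoff_eq_indicator (δ x : ℝ) :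
    dampedCallPayoff δ x =
      (Ioi 0).indicator (fun x => Real.exp (-δ * x) - Real.exp (-(δ + 1) * x)) x := by
  unfold dampedCallPayoff
  rcases le_or_gt x 0 with hx | hx
  · have : Real.exp x - 1 ≤ 0 := by simpa using hx
    rw [indicator_of_notMem (notMem_Ioi.2 hx), max_eq_right this, mul_zero]
  · have : 0 ≤ Real.exp x - 1 := by simpa using hx.le
    rw [indicator_of_mem (mem_Ioi.2 hx), max_eq_left this, mul_sub, ← Real.exp_add]
    ring_nf

theorem integrable_dampedCallPayoff (hδ : 0 < δ) :
    Integrable fun x => (dampedCallPayoff δ x : ℂ) := by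
  simp_rw [dampedCallPayoff_eq_indicator]
  exact (((integrableOn_exp_mul_Ioi (by linarith) 0).sub
    (integrableOn_exp_mul_Ioi (by linarith) 0)).integrable_indicator measurableSet_Ioi).ofReal

theorem exp_mul_dampedCallPayoff_sub_log {K : ℝ} (hK : 0 < K) (y : ℝ) :
    Real.exp ((δ + 1) * y) * dampedCallPayoff δ (y - Real.log K)
      = K ^ δ * max (Real.exp y - K) 0 := by
  have hexp : Real.exp ((δ + 1) * y) * Real.exp (-((δ + 1) * (y - Real.log K))) = K ^ δ * K := by
    rw [← Real.exp_add, ← Real.rpow_add_one hK.ne', Real.rpow_def_of_pos hK]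
    ring_nf
  have hmax : K * max (Real.exp (y - Real.log K) - 1) 0 = max (Real.exp y - K) 0 := by
    rw [mul_max_of_nonneg _ _ hK.le, Real.exp_sub, Real.exp_log hK, mul_zero, mul_sub,
      mul_div_cancel₀ _ hK.ne', mul_one]
  rw [dampedCallPayoff, ← mul_assoc, hexp, mul_assoc, hmax]

end DampedCallPayoff

section DampedDenom

variable {δ : ℝ}

theorem sq_add_sq_le_norm_dampedDenom (hδ : 0 ≤ δ) (η : ℝ) :
    δ ^ 2 + η ^ 2 ≤ ‖dampedDenom δ η‖ := by
  have ha : ‖(δ : ℂ) + η * I‖ ^ 2 = δ ^ 2 + η ^ 2 := by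
    rw [Complex.sq_norm, Complex.normSq_add_mul_I]
  have hb : ‖(δ : ℂ) + 1 + η * I‖ ^ 2 = (δ + 1) ^ 2 + η ^ 2 := by
    rw [Complex.sq_norm, ← Complex.normSq_add_mul_I]
    push_cast
    ring_nf
  have hab : ‖(δ : ℂ) + η * I‖ ≤ ‖(δ : ℂ) + 1 + η * I‖ :=
    (pow_le_pow_iff_left₀ (norm_nonneg _) (norm_nonneg _) two_ne_zero).1 (by nlinarith)
  rw [dampedDenom, norm_mul, ← ha, sq]
  exact mul_le_mul_of_nonneg_left hab (norm_nonneg _)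

theorem dampedDenom_ne_zero (hδ : 0 < δ) (η : ℝ) : dampedDenom δ η ≠ 0 :=
  norm_pos_iff.1 <| (by positivity : (0 : ℝ) < δ ^ 2 + η ^ 2).trans_le
    (sq_add_sq_le_norm_dampedDenom hδ.le η)

theorem continuous_dampedDenom (δ : ℝ) : Continuous (dampedDenom δ) := by
  unfold dampedDenom
  fun_prop

theorem integrable_inv_dampedDenom (hδ : 0 < δ) :
    Integrable fun η => (dampedDenom δ η)⁻¹ := by
  refine (integrable_inv_sq_add_sq hδ.ne').mono'
    ((continuous_dampedDenom δ).inv₀ (dampedDenom_ne_zero hδ)).aestronglyMeasurable ?_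
  filter_upwards with η
  rw [norm_inv]
  exact inv_anti₀ (by positivity) (sq_add_sq_le_norm_dampedDenom hδ.le η)

end DampedDenom

section FourierInversion

variable {δ : ℝ}

theorem fourier_dampedCallPayoff (hδ : 0 < δ) (ξ : ℝ) :
    𝓕 (fun x => (dampedCallPayoff δ x : ℂ)) ξ = (dampedDenom δ (2 * π * ξ))⁻¹ := by
  set s : ℂ := δ + 2 * π * ξ * I with hs_def
  have hs : 0 < s.re := by simpa [s] using hδ
  have hs0 : s ≠ 0 := fun h => by simp [h] at hs
  have hs1 : s + 1 ≠ 0 := fun h => by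
    have := congrArg re h
    simp [s] at this
    linarith
  have hintegrand : (fun v : ℝ => cexp (↑(-2 * π * v * ξ) * I) • (dampedCallPayoff δ v : ℂ)) =
      (Ioi 0).indicator (fun v : ℝ => cexp (-s * v) - cexp (-(s + 1) * v)) := by
    ext v
    rw [dampedCallPayoff_eq_indicator]
    by_cases hv : v ∈ Ioi 0
    · simp only [indicator_of_mem hv, smul_eq_mul]
      push_cast
      rw [mul_sub, ← Complex.exp_add, ← Complex.exp_add, hs_def]
      congr 2 <;> ring
    · simp [hv]
  have hdenom : dampedDenom δ (2 * π * ξ) = s * (s + 1) := by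
    rw [dampedDenom, hs_def]; push_cast; ring
  rw [Real.fourier_real_eq_integral_exp_smul, hintegrand, integral_indicator measurableSet_Ioi,
    integral_sub (integrableOn_exp_mul_complex_Ioi (by simpa) 0)
      (integrableOn_exp_mul_complex_Ioi (by simp; linarith) 0),
    integral_exp_mul_complex_Ioi (by simpa) 0, integral_exp_mul_complex_Ioi (by simp; linarith) 0,
    hdenom]
  simp only [ofReal_zero, mul_zero, Complex.exp_zero]
  field_simp
  ring

theorem integrable_fourier_dampedCallPayoff (hδ : 0 < δ) :
    Integrable (𝓕 fun x => (dampedCallPayoff δ x : ℂ)) := by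
  simp_rw [funext (fourier_dampedCallPayoff hδ)]
  exact (integrable_inv_dampedDenom hδ).comp_mul_left' (by positivity)

theorem integral_cexp_mul_I_div_dampedDenom (hδ : 0 < δ) (x : ℝ) :
    ∫ η : ℝ, cexp (↑(η * x) * I) / dampedDenom δ η = 2 * π * dampedCallPayoff δ x := by
  have hinv := (integrable_dampedCallPayoff hδ).fourierInv_fourier_eq
    (integrable_fourier_dampedCallPayoff hδ)
    (Complex.continuous_ofReal.comp (continuous_dampedCallPayoff δ)).continuousAt (v := x)
  set F : ℝ → ℂ := fun η => cexp (↑(η * x) * I) / dampedDenom δ η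
  have hscale := Measure.integral_comp_mul_left F (2 * π)
  rw [abs_of_pos (by positivity)] at hscale
  simp only [Real.fourierInv_eq', fourier_dampedCallPayoff hδ] at hinv
  have hF : (fun v : ℝ => cexp (↑(2 * π * inner ℝ v x) * I) • (dampedDenom δ (2 * π * v))⁻¹)
      = fun v => F (2 * π * v) := by
    ext v
    simp only [F, smul_eq_mul, RCLike.inner_apply, conj_trivial, div_eq_mul_inv]
    ring_nf
  rw [hF, hscale, Complex.real_smul] at hinv
  rw [← hinv, ← mul_assoc]
  push_cast
  field_simp

end FourierInversion

noncomputable def callIntegrand (δ k η y : ℝ) : ℂ :=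
  cexp (-(η * k) * I) * (cexp ((δ + 1 + η * I) * y) / dampedDenom δ η)

section CallIntegrand

variable {δ : ℝ}

theorem callIntegrand_eq (δ k η y : ℝ) :
    callIntegrand δ k η y =
      Real.exp ((δ + 1) * y) * (cexp (↑(η * (y - k)) * I) / dampedDenom δ η) := by
  rw [callIntegrand, ← mul_div_assoc, ← mul_div_assoc, ← Complex.exp_add, ofReal_exp,
    ← Complex.exp_add]
  congr 2
  push_cast
  ring

theorem norm_callIntegrand_le (hδ : 0 < δ) (k η y : ℝ) :
    ‖callIntegrand δ k η y‖ ≤ (δ ^ 2 + η ^ 2)⁻¹ * Real.exp ((δ + 1) * y) := by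
  rw [callIntegrand_eq, norm_mul, norm_div, Complex.norm_exp_ofReal_mul_I, Complex.norm_real,
    Real.norm_of_nonneg (Real.exp_pos _).le, one_div, mul_comm]
  have : 0 < δ ^ 2 + η ^ 2 := by positivity
  gcongr
  exact sq_add_sq_le_norm_dampedDenom hδ.le η

theorem integral_callIntegrand (hδ : 0 < δ) {K : ℝ} (hK : 0 < K) (y : ℝ) :
    ∫ η : ℝ, callIntegrand δ (Real.log K) η y = 2 * π * ↑(K ^ δ * max (Real.exp y - K) 0) := by
  simp_rw [callIntegrand_eq]
  rw [integral_const_mul, integral_cexp_mul_I_div_dampedDenom hδ,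
    ← exp_mul_dampedCallPayoff_sub_log hK]
  push_cast
  ring

theorem integrable_callIntegrand_prod {Ω : Type*} {_ : MeasurableSpace Ω}
    {P : Measure Ω} [SFinite P] {Y : Ω → ℝ} (hδ : 0 < δ)
    (hint : Integrable (fun ω => Real.exp ((δ + 1) * Y ω)) P) (k : ℝ) :
    Integrable (fun p : ℝ × Ω => callIntegrand δ k p.1 (Y p.2)) (volume.prod P) := by
  have hY : AEMeasurable Y P :=
    aemeasurable_of_aemeasurable_exp_const_mul (by linarith) hint.aemeasurable
  have hmeas : AEStronglyMeasurable (fun p : ℝ × Ω => callIntegrand δ k p.1 (Y p.2))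
      (volume.prod P) := by
    have hcont : Continuous fun q : ℝ × ℝ => callIntegrand δ k q.1 q.2 := by
      unfold callIntegrand
      have := (continuous_dampedDenom δ).comp (continuous_fst (X := ℝ) (Y := ℝ))
      fun_prop (disch := exact fun q => dampedDenom_ne_zero hδ q.1)
    have hpair : AEMeasurable (fun p : ℝ × Ω => (p.1, Y p.2)) (volume.prod P) :=
      measurable_fst.aemeasurable.prodMk hY.comp_snd
    exact (hcont.comp_aestronglyMeasurable hpair.aestronglyMeasurable :
      AEStronglyMeasurable ((fun q : ℝ × ℝ => callIntegrand δ k q.1 q.2) ∘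
        fun p : ℝ × Ω => (p.1, Y p.2)) (volume.prod P))
  refine ((integrable_inv_sq_add_sq hδ.ne').mul_prod hint).mono' hmeas ?_
  filter_upwards with p
  exact norm_callIntegrand_le hδ k p.1 (Y p.2)

end CallIntegrand

theorem fourier_inversion_call_price_general {Ω : Type*} {mF : MeasurableSpace Ω}
    (P : Measure Ω) [IsProbabilityMeasure P]
    (Y : Ω → ℝ) (δ : ℝ) (hδ : 0 < δ)
    (hint : Integrable (fun ω => Real.exp ((δ + 1) * Y ω)) P)
    (K : ℝ) (hK : 0 < K) :
    ((∫ ω, max (Real.exp (Y ω) - K) 0 ∂P : ℝ) : ℂ)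
      = ((K ^ (-δ) : ℝ) : ℂ) / (2 * Real.pi) *
          ∫ η : ℝ, Complex.exp (-((η : ℂ) * Real.log K) * Complex.I) *
            ((∫ ω, Complex.exp (((δ : ℂ) + 1 + η * Complex.I) * Y ω) ∂P)
              / (((δ : ℂ) + η * Complex.I) * ((δ : ℂ) + 1 + η * Complex.I))) := by
  have hKδ : ((K ^ (-δ) : ℝ) : ℂ) * ((K ^ δ : ℝ) : ℂ) = 1 := by
    rw [← ofReal_mul, ← Real.rpow_add hK, neg_add_cancel, Real.rpow_zero, ofReal_one]
  calc ((∫ ω, max (Real.exp (Y ω) - K) 0 ∂P : ℝ) : ℂ)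
      = ((K ^ (-δ) : ℝ) : ℂ) / (2 * π) *
          ∫ ω, 2 * π * ((K ^ δ * max (Real.exp (Y ω) - K) 0 : ℝ) : ℂ) ∂P := by
        rw [integral_const_mul, integral_complex_ofReal, integral_const_mul, ofReal_mul]
        field_simp
        linear_combination (-(((∫ ω, max (Real.exp (Y ω) - K) 0 ∂P : ℝ) : ℂ))) * hKδ
    _ = ((K ^ (-δ) : ℝ) : ℂ) / (2 * π) *
          ∫ ω, (∫ η : ℝ, callIntegrand δ (Real.log K) η (Y ω)) ∂P := by
        simp_rw [integral_callIntegrand hδ hK]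
    _ = ((K ^ (-δ) : ℝ) : ℂ) / (2 * π) *
          ∫ η : ℝ, ∫ ω, callIntegrand δ (Real.log K) η (Y ω) ∂P := by
        rw [(integral_integral_swap (integrable_callIntegrand_prod hδ hint (Real.log K))).symm]
    _ = _ := by
        simp_rw [callIntegrand, integral_const_mul, integral_div]
        rfl

/-- **Fourier-inversion pricing formula for the geometric-basket call.**
If `E[e^{(δ+1)Y}] < ∞` with `δ > 0` and the damped Fourier transform
`η ↦ E[e^{(δ+1+iη)Y}] / ((δ + iη)(δ + 1 + iη))` is Lebesgue-integrable on `ℝ`,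
then for every strike `K > 0`,
`E[(e^Y − K)⁺] = (K^{−δ} / (2π)) ∫_ℝ e^{−iη ln K} E[e^{(δ+1+iη)Y}] / ((δ+iη)(δ+1+iη)) dη`. -/
theorem fourier_inversion_call_price {Ω : Type*} {mF : MeasurableSpace Ω}
    (P : Measure Ω) [IsProbabilityMeasure P]
    (Y : Ω → ℝ) (hY : Measurable Y) (δ : ℝ) (hδ : 0 < δ)
    (hint : Integrable (fun ω => Real.exp ((δ + 1) * Y ω)) P)
    (hFint : Integrable (fun η : ℝ =>
      (∫ ω, Complex.exp (((δ : ℂ) + 1 + η * Complex.I) * Y ω) ∂P)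
        / (((δ : ℂ) + η * Complex.I) * ((δ : ℂ) + 1 + η * Complex.I))))
    (K : ℝ) (hK : 0 < K) :
    ((∫ ω, max (Real.exp (Y ω) - K) 0 ∂P : ℝ) : ℂ)
      = ((K ^ (-δ) : ℝ) : ℂ) / (2 * Real.pi) *
          ∫ η : ℝ, Complex.exp (-((η : ℂ) * Real.log K) * Complex.I) *
            ((∫ ω, Complex.exp (((δ : ℂ) + 1 + η * Complex.I) * Y ω) ∂P)
              / (((δ : ℂ) + η * Complex.I) * ((δ : ℂ) + 1 + η * Complex.I))) :=
  fourier_inversion_call_price_general (mF := mF) P Y δ hδ hint K hK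
end

section
/- The map ψ : τ ↦ A₂₂(τ)⁻¹ · A₂₁(τ) satisfies ψ(0) = 0, and for every τ₀ ∈ ℝ at which A₂₂(τ₀) is invertible, ψ is differentiable at τ₀ with derivative ψ(τ₀) H + Hᵀ ψ(τ₀) − 2 ψ(τ₀) Qᵀ Q ψ(τ₀) + U. (This is the paper's Proposition on solving the matrix Riccati ODE ∂ψ/∂τ = ψH + Hᵀψ − 2ψQᵀQψ + R + M, ψ(0) = 0, arising in the Wishart short rate model, via linearization by a block matrix exponential, with U = R + M.) -/
/-!
Differentiating `exp(τL)` shows that the bottom block row `(A₂₁, A₂₂)` solves the linear ODE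
`(A₂₁, A₂₂)' = (A₂₁, A₂₂) L`. For any pair with `A' = A H + B U`, `B' = A K + B M` and `B`
invertible, the product rule and `(B⁻¹)' = −B⁻¹ B' B⁻¹` give `X' = X H + U − X K X − M X` for
`X = B⁻¹ A`; with `K = 2QᵀQ` and `M = −Hᵀ` this is the Riccati equation.
-/

open Matrix

attribute [local instance] Matrix.linftyOpNormedAddCommGroup Matrix.linftyOpNormedSpace
attribute [local instance] Matrix.linftyOpNormedRing Matrix.linftyOpNormedAlgebra

section RingInverse

variable {𝕜 R : Type*} [NontriviallyNormedField 𝕜] [NormedRing R] [NormedAlgebra 𝕜 R]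
  [HasSummableGeomSeries R] {t : 𝕜}

theorem HasDerivAt.ringInverse {B : 𝕜 → R} {B' : R} (hB : HasDerivAt B B' t)
    (hu : IsUnit (B t)) :
    HasDerivAt (fun s => Ring.inverse (B s))
      (-(Ring.inverse (B t) * B' * Ring.inverse (B t))) t := by
  obtain ⟨u, hu⟩ := hu
  have hinv := hasFDerivAt_ringInverse (𝕜 := 𝕜) u
  rw [hu] at hinv
  simpa [← hu, Ring.inverse_unit, Function.comp_def] using hinv.comp_hasDerivAt t hB

theorem hasDerivAt_ringInverse_mul_of_linear {A B : 𝕜 → R} {H K U M : R}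
    (hA : HasDerivAt A (A t * H + B t * U) t) (hB : HasDerivAt B (A t * K + B t * M) t)
    (hu : IsUnit (B t)) :
    HasDerivAt (fun s => Ring.inverse (B s) * A s)
      (Ring.inverse (B t) * A t * H + U - Ring.inverse (B t) * A t * K * (Ring.inverse (B t) * A t)
        - M * (Ring.inverse (B t) * A t)) t := by
  refine ((hB.ringInverse hu).mul hA).congr_deriv ?_
  have hBB : Ring.inverse (B t) * B t = 1 := Ring.inverse_mul_cancel _ hu
  simp only [mul_add, add_mul, neg_mul, neg_add, ← mul_assoc, hBB, one_mul]
  abel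

end RingInverse

section Blocks

variable {𝕜 l m n o : Type*} [NontriviallyNormedField 𝕜] [CompleteSpace 𝕜]
  [Fintype l] [Fintype m] [Fintype n] [Fintype o] {t : 𝕜}

theorem HasDerivAt.submatrix {f : 𝕜 → Matrix m n 𝕜} {f' : Matrix m n 𝕜} (hf : HasDerivAt f f' t)
    (r : l → m) (c : o → n) :
    HasDerivAt (fun s => (f s).submatrix r c) (f'.submatrix r c) t :=
  let submatrixₗ : Matrix m n 𝕜 →ₗ[𝕜] Matrix l o 𝕜 :=
    { toFun := fun M => M.submatrix r c
      map_add' := fun _ _ => rfl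
      map_smul' := fun _ _ => rfl }
  submatrixₗ.toContinuousLinearMap.hasFDerivAt.comp_hasDerivAt (f := f) t hf

variable {E : 𝕜 → Matrix (m ⊕ n) (m ⊕ n) 𝕜}
  {A : Matrix m m 𝕜} {B : Matrix m n 𝕜} {C : Matrix n m 𝕜} {D : Matrix n n 𝕜}

theorem HasDerivAt.toBlocks₂₁_of_mul_fromBlocks (hE : HasDerivAt E (E t * fromBlocks A B C D) t) :
    HasDerivAt (fun s => (E s).toBlocks₂₁) ((E t).toBlocks₂₁ * A + (E t).toBlocks₂₂ * C) t := by
  have h := hE.submatrix Sum.inr Sum.inl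
  rwa [← fromBlocks_toBlocks (E t), fromBlocks_multiply] at h

theorem HasDerivAt.toBlocks₂₂_of_mul_fromBlocks (hE : HasDerivAt E (E t * fromBlocks A B C D) t) :
    HasDerivAt (fun s => (E s).toBlocks₂₂) ((E t).toBlocks₂₁ * B + (E t).toBlocks₂₂ * D) t := by
  have h := hE.submatrix Sum.inr Sum.inr
  rwa [← fromBlocks_toBlocks (E t), fromBlocks_multiply] at h

end Blocks

theorem riccati_psi_solution_general (d : ℕ)
    (H Q U : Matrix (Fin d) (Fin d) ℝ)
    (L : Matrix (Fin d ⊕ Fin d) (Fin d ⊕ Fin d) ℝ)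
    (hL : L = Matrix.fromBlocks H (2 • (Qᵀ * Q)) U (-Hᵀ))
    (A21 A22 : ℝ → Matrix (Fin d) (Fin d) ℝ)
    (hA21 : ∀ τ : ℝ, A21 τ = (NormedSpace.exp (τ • L)).toBlocks₂₁)
    (hA22 : ∀ τ : ℝ, A22 τ = (NormedSpace.exp (τ • L)).toBlocks₂₂)
    (ψ : ℝ → Matrix (Fin d) (Fin d) ℝ)
    (hψ : ∀ τ : ℝ, ψ τ = (A22 τ)⁻¹ * A21 τ) :
    ψ 0 = 0 ∧ ∀ τ₀ : ℝ, IsUnit (A22 τ₀) →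
      HasDerivAt ψ
        (ψ τ₀ * H + Hᵀ * ψ τ₀ - 2 • (ψ τ₀ * (Qᵀ * Q) * ψ τ₀) + U) τ₀ := by
  subst hL
  have hA21' : A21 = fun τ => _ := funext hA21
  have hA22' : A22 = fun τ => _ := funext hA22
  have hψ' : ψ = fun τ => Ring.inverse (A22 τ) * A21 τ :=
    funext fun τ => by rw [hψ, nonsing_inv_eq_ringInverse]
  refine ⟨?_, fun τ₀ hu => ?_⟩
  · rw [hψ, hA21, zero_smul, NormedSpace.exp_zero, ← fromBlocks_one, toBlocks_fromBlocks₂₁,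
      mul_zero]
  have hE := hasDerivAt_exp_smul_const (𝕂 := ℝ) (fromBlocks H (2 • (Qᵀ * Q)) U (-Hᵀ)) τ₀
  have h21 : HasDerivAt A21 (A21 τ₀ * H + A22 τ₀ * U) τ₀ := by
    rw [hA21', hA22']; exact hE.toBlocks₂₁_of_mul_fromBlocks
  have h22 : HasDerivAt A22 (A21 τ₀ * (2 • (Qᵀ * Q)) + A22 τ₀ * -Hᵀ) τ₀ := by
    rw [hA21', hA22']; exact hE.toBlocks₂₂_of_mul_fromBlocks
  rw [hψ']
  refine (hasDerivAt_ringInverse_mul_of_linear h21 h22 hu).congr_deriv ?_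
  beta_reduce
  simp only [smul_mul_assoc, mul_smul_comm, neg_mul, sub_neg_eq_add, mul_assoc]
  abel

/-- **Solution of the matrix Riccati ODE by block-matrix exponential linearization.**
With `L = [[H, 2QᵀQ], [U, −Hᵀ]]` and `exp(τL) = [[A₁₁(τ), A₁₂(τ)], [A₂₁(τ), A₂₂(τ)]]`,
the map `ψ(τ) = A₂₂(τ)⁻¹ A₂₁(τ)` satisfies `ψ(0) = 0`, and at every `τ₀` where `A₂₂(τ₀)`
is invertible, `ψ` is differentiable with derivative `ψH + Hᵀψ − 2ψQᵀQψ + U`. -/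
theorem riccati_psi_solution (d : ℕ) (hd : 1 ≤ d)
    (H Q U : Matrix (Fin d) (Fin d) ℝ)
    (L : Matrix (Fin d ⊕ Fin d) (Fin d ⊕ Fin d) ℝ)
    (hL : L = Matrix.fromBlocks H (2 • (Qᵀ * Q)) U (-Hᵀ))
    (A21 A22 : ℝ → Matrix (Fin d) (Fin d) ℝ)
    (hA21 : ∀ τ : ℝ, A21 τ = (NormedSpace.exp (τ • L)).toBlocks₂₁)
    (hA22 : ∀ τ : ℝ, A22 τ = (NormedSpace.exp (τ • L)).toBlocks₂₂)
    (ψ : ℝ → Matrix (Fin d) (Fin d) ℝ)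
    (hψ : ∀ τ : ℝ, ψ τ = (A22 τ)⁻¹ * A21 τ) :
    ψ 0 = 0 ∧ ∀ τ₀ : ℝ, IsUnit (A22 τ₀) →
      HasDerivAt ψ
        (ψ τ₀ * H + Hᵀ * ψ τ₀ - 2 • (ψ τ₀ * (Qᵀ * Q) * ψ τ₀) + U) τ₀ :=
  riccati_psi_solution_general d H Q U L hL A21 A22 hA21 hA22 ψ hψ
end

section
/- Let β ∈ ℝ and define φ(τ) = (β/2) (log(det A₂₂(τ)) + τ · tr(Hᵀ)). Then φ(0) = 0, and for every τ₀ ∈ ℝ with det A₂₂(τ₀) > 0, φ is differentiable at τ₀ with derivative tr(β Qᵀ Q ψ(τ₀)), where ψ(τ₀) = A₂₂(τ₀)⁻¹ A₂₁(τ₀). (This is the second half of the paper's Proposition solving the Riccati system for the Wishart short rate model: φ solves ∂φ/∂τ = Tr[β QᵀQ ψ(τ)], φ(0) = 0.) -/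
/-!
By Jacobi's formula, `(log det A₂₂)' = tr (A₂₂⁻¹ A₂₂')` wherever `det A₂₂ ≠ 0`. Differentiating
`exp (τL)` gives `exp (τL) L`, whose lower right block is `A₂₂' = 2 A₂₁ QᵀQ − A₂₂ Hᵀ`. Hence
`φ' = (β/2) (2 tr (A₂₂⁻¹ A₂₁ QᵀQ) − tr Hᵀ + tr Hᵀ) = tr (β QᵀQ A₂₂⁻¹ A₂₁)`.
-/

open Matrix

namespace Matrix

variable {n : Type*} [Fintype n] [DecidableEq n]

theorem trace_adjugate_mul {R : Type*} [CommRing R] (A B : Matrix n n R) :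
    (A.adjugate * B).trace = ∑ i, (A.updateCol i fun k => B k i).det := by
  refine Finset.sum_congr rfl fun i _ => ?_
  rw [← cramer_apply, cramer_eq_adjugate_mulVec]
  rfl

theorem det_updateCol_eq_sum_perm {R : Type*} [CommRing R] (A : Matrix n n R) (i : n)
    (c : n → R) :
    (A.updateCol i c).det = ∑ σ : Equiv.Perm n,
      (Equiv.Perm.sign σ : R) * ((∏ j ∈ Finset.univ.erase i, A (σ j) j) * c (σ i)) := by
  rw [det_apply']
  refine Finset.sum_congr rfl fun σ _ => ?_
  rw [← Finset.mul_prod_erase _ _ (Finset.mem_univ i), updateCol_self, mul_comm (c (σ i))]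
  congr 2
  exact Finset.prod_congr rfl fun j hj => updateCol_ne (Finset.ne_of_mem_erase hj)

theorem hasDerivAt_det {𝕜 : Type*} [NontriviallyNormedField 𝕜] {A : 𝕜 → Matrix n n 𝕜}
    {A' : Matrix n n 𝕜} {t : 𝕜} (h : ∀ i j, HasDerivAt (fun s => A s i j) (A' i j) t) :
    HasDerivAt (fun s => (A s).det) ((A t).adjugate * A').trace t := by
  have hsum : HasDerivAt (fun s => (A s).det) (∑ σ : Equiv.Perm n, (Equiv.Perm.sign σ : 𝕜) *
      ∑ i, (∏ j ∈ Finset.univ.erase i, A t (σ j) j) * A' (σ i) i) t := by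
    simp only [det_apply']
    exact HasDerivAt.fun_sum fun σ _ =>
      (HasDerivAt.fun_finsetProd fun i _ => h (σ i) i).const_mul _
  convert hsum using 1
  simp only [trace_adjugate_mul, det_updateCol_eq_sum_perm, Finset.mul_sum]
  exact Finset.sum_comm

theorem hasDerivAt_log_det {A : ℝ → Matrix n n ℝ} {A' : Matrix n n ℝ} {t : ℝ}
    (h : ∀ i j, HasDerivAt (fun s => A s i j) (A' i j) t) (hA : (A t).det ≠ 0) :
    HasDerivAt (fun s => Real.log (A s).det) ((A t)⁻¹ * A').trace t := by
  convert (hasDerivAt_det h).log hA using 1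
  rw [inv_def, Ring.inverse_eq_inv', smul_mul, trace_smul, smul_eq_mul, div_eq_inv_mul]

theorem hasDerivAt_exp_smul_apply {𝕂 : Type*} [RCLike 𝕂] (L : Matrix n n 𝕂) (t : 𝕂)
    (i j : n) :
    HasDerivAt (fun s : 𝕂 => NormedSpace.exp (s • L) i j)
      ((NormedSpace.exp (t • L) * L) i j) t := by
  let _ : NormedRing (Matrix n n 𝕂) := Matrix.linftyOpNormedRing
  let _ : NormedAlgebra 𝕂 (Matrix n n 𝕂) := Matrix.linftyOpNormedAlgebra
  exact (LinearMap.toContinuousLinearMap (entryLinearMap 𝕂 𝕂 i j)).hasFDerivAt.comp_hasDerivAt t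
    (@hasDerivAt_exp_smul_const _ _ _ _ _ (FiniteDimensional.complete 𝕂 _) L t)

theorem toBlocks₂₂_mul_fromBlocks {l m o p q r α : Type*} [Fintype l] [Fintype m]
    [NonUnitalNonAssocSemiring α] (M : Matrix (o ⊕ p) (l ⊕ m) α) (A : Matrix l q α)
    (B : Matrix l r α) (C : Matrix m q α) (D : Matrix m r α) :
    (M * fromBlocks A B C D).toBlocks₂₂ = M.toBlocks₂₁ * B + M.toBlocks₂₂ * D := by
  conv_lhs => rw [← fromBlocks_toBlocks M, fromBlocks_multiply]
  rfl

end Matrix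

theorem riccati_phi_solution_general (d : ℕ) (β : ℝ)
    (H Q U : Matrix (Fin d) (Fin d) ℝ)
    (L : Matrix (Fin d ⊕ Fin d) (Fin d ⊕ Fin d) ℝ)
    (hL : L = Matrix.fromBlocks H (2 • (Qᵀ * Q)) U (-Hᵀ))
    (A21 A22 : ℝ → Matrix (Fin d) (Fin d) ℝ)
    (hA21 : ∀ τ : ℝ, A21 τ = (NormedSpace.exp (τ • L)).toBlocks₂₁)
    (hA22 : ∀ τ : ℝ, A22 τ = (NormedSpace.exp (τ • L)).toBlocks₂₂)
    (φ : ℝ → ℝ)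
    (hφ : ∀ τ : ℝ, φ τ = (β / 2) * (Real.log (A22 τ).det + τ * Hᵀ.trace)) :
    φ 0 = 0 ∧ ∀ τ₀ : ℝ, 0 < (A22 τ₀).det →
      HasDerivAt φ ((β • (Qᵀ * Q) * ((A22 τ₀)⁻¹ * A21 τ₀)).trace) τ₀ := by
  have hA22_deriv (t : ℝ) (i j : Fin d) :
      HasDerivAt (fun s => A22 s i j) ((A21 t * (2 • (Qᵀ * Q)) + A22 t * -Hᵀ) i j) t := by
    rw [hA21, hA22, ← toBlocks₂₂_mul_fromBlocks, ← hL]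
    simp only [hA22]
    exact hasDerivAt_exp_smul_apply L t (.inr i) (.inr j)
  refine ⟨?_, fun τ₀ hdet => ?_⟩
  · rw [hφ, hA22, zero_smul, NormedSpace.exp_zero, ← fromBlocks_one, toBlocks_fromBlocks₂₂]
    simp
  have hlog := hasDerivAt_log_det (hA22_deriv τ₀) hdet.ne'
  have hφ_deriv : HasDerivAt φ ((β / 2) * (((A22 τ₀)⁻¹ *
      (A21 τ₀ * (2 • (Qᵀ * Q)) + A22 τ₀ * -Hᵀ)).trace + Hᵀ.trace)) τ₀ := by
    rw [funext hφ]
    exact (hlog.add (hasDerivAt_mul_const _)).const_mul _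
  have hinv : (A22 τ₀)⁻¹ * A22 τ₀ = 1 := nonsing_inv_mul _ (isUnit_iff_ne_zero.mpr hdet.ne')
  convert hφ_deriv using 1
  rw [Matrix.mul_add, ← Matrix.mul_assoc _ (A22 τ₀), hinv, Matrix.one_mul, trace_add, trace_neg,
    Matrix.mul_smul, Matrix.mul_smul, trace_smul, smul_mul, trace_smul, trace_mul_comm,
    Matrix.mul_assoc]
  simp only [smul_eq_mul, nsmul_eq_mul]
  ring

/-- **Solution of the φ-equation of the Riccati system for the Wishart model.**
With `L = [[H, 2QᵀQ], [U, −Hᵀ]]`, `exp(τL) = [[A₁₁(τ), A₁₂(τ)], [A₂₁(τ), A₂₂(τ)]]` and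
`φ(τ) = (β/2)(log det A₂₂(τ) + τ tr(Hᵀ))`, we have `φ(0) = 0`, and at every `τ₀`
with `det A₂₂(τ₀) > 0`, `φ` is differentiable with derivative
`tr(β QᵀQ ψ(τ₀))`, where `ψ(τ₀) = A₂₂(τ₀)⁻¹ A₂₁(τ₀)`. -/
theorem riccati_phi_solution (d : ℕ) (hd : 1 ≤ d) (β : ℝ)
    (H Q U : Matrix (Fin d) (Fin d) ℝ)
    (L : Matrix (Fin d ⊕ Fin d) (Fin d ⊕ Fin d) ℝ)
    (hL : L = Matrix.fromBlocks H (2 • (Qᵀ * Q)) U (-Hᵀ))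
    (A21 A22 : ℝ → Matrix (Fin d) (Fin d) ℝ)
    (hA21 : ∀ τ : ℝ, A21 τ = (NormedSpace.exp (τ • L)).toBlocks₂₁)
    (hA22 : ∀ τ : ℝ, A22 τ = (NormedSpace.exp (τ • L)).toBlocks₂₂)
    (φ : ℝ → ℝ)
    (hφ : ∀ τ : ℝ, φ τ = (β / 2) * (Real.log (A22 τ).det + τ * Hᵀ.trace)) :
    φ 0 = 0 ∧ ∀ τ₀ : ℝ, 0 < (A22 τ₀).det →
      HasDerivAt φ ((β • (Qᵀ * Q) * ((A22 τ₀)⁻¹ * A21 τ₀)).trace) τ₀ :=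
  riccati_phi_solution_general d β H Q U L hL A21 A22 hA21 hA22 φ hφ
end

section
/- Let u be a symmetric d×d real matrix and define g : M_d(ℝ) → ℝ by g(x) = exp(−tr(u·x)). Then for every x ∈ M_d(ℝ): Σ_{i,j} (βQᵀQ + Hx + xHᵀ)_{ij} · (∂g/∂x_{ji})(x) + 2 Σ_{i,j,k,l} x_{ij} (QᵀQ)_{kl} · (∂²g/∂x_{jk}∂x_{li})(x) = ( −tr(βQᵀQ u) + tr((2 u QᵀQ u − u H − Hᵀ u) x) ) · g(x). (This is the paper's computation of the Wishart infinitesimal generator 𝒜 = Tr((βQᵀQ + Hx + xHᵀ)D^S + 2x D^S QᵀQ D^S) applied to e^{−Tr(ψ x)}, used in the proof of its zero-coupon bond pricing theorem.) -/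
/-!
`g` is the exponential of the linear functional `v ↦ -tr(u v)`, so its first and second
directional derivatives are `-tr(u v) g` and `tr(u v) tr(u w) g`. Along elementary matrices these
traces are entries of `u`, so the drift and diffusion sums contract to `-tr(A uᵀ) g` and
`tr(x uᵀ G uᵀ) g` (with `A = βQᵀQ + Hx + xHᵀ`, `G = QᵀQ`); symmetry of `u` and cyclicity of the
trace then give the stated coefficient.
-/

open Matrix

attribute [local instance] Matrix.linftyOpNormedAddCommGroup Matrix.linftyOpNormedSpace

theorem Matrix.sum_apply_mul_apply_eq_trace_mul_transpose {n R : Type*} [Fintype n]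
    [NonUnitalNonAssocSemiring R] (A B : Matrix n n R) :
    ∑ i, ∑ j, A i j * B i j = (A * Bᵀ).trace := by
  simp [trace, mul_apply]

theorem Matrix.trace_mul_single_one {n R : Type*} [Fintype n] [DecidableEq n] [Semiring R]
    (u : Matrix n n R) (i j : n) : (u * single i j 1).trace = u j i := by
  simp [trace_mul_single]

section

variable {n : Type*} [Fintype n]

theorem hasFDerivAt_exp_neg_trace_mul (u x : Matrix n n ℝ) :
    HasFDerivAt (fun y => Real.exp (-(u * y).trace))
      (Real.exp (-(u * x).trace) •
        -LinearMap.toContinuousLinearMap (traceLinearMap n ℝ ℝ ∘ₗ LinearMap.mulLeft ℝ u)) x :=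
  (LinearMap.toContinuousLinearMap (traceLinearMap n ℝ ℝ ∘ₗ LinearMap.mulLeft ℝ u)).hasFDerivAt.neg.exp

theorem fderiv_exp_neg_trace_mul_apply (u x v : Matrix n n ℝ) :
    fderiv ℝ (fun y => Real.exp (-(u * y).trace)) x v
      = -(u * v).trace * Real.exp (-(u * x).trace) := by
  simp [(hasFDerivAt_exp_neg_trace_mul u x).fderiv, mul_comm]

theorem fderiv_fderiv_exp_neg_trace_mul_apply (u x v w : Matrix n n ℝ) :
    fderiv ℝ (fun y => fderiv ℝ (fun y => Real.exp (-(u * y).trace)) y v) x w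
      = (u * v).trace * (u * w).trace * Real.exp (-(u * x).trace) := by
  have h : HasFDerivAt (fun y => -(u * v).trace * Real.exp (-(u * y).trace))
      (-(u * v).trace • fderiv ℝ (fun y => Real.exp (-(u * y).trace)) x) x :=
    (hasFDerivAt_exp_neg_trace_mul u x).differentiableAt.hasFDerivAt.const_mul _
  simp only [fderiv_exp_neg_trace_mul_apply]
  rw [h.fderiv, _root_.smul_apply, fderiv_exp_neg_trace_mul_apply, smul_eq_mul]
  ring

variable [DecidableEq n]

theorem sum_apply_mul_fderiv_exp_neg_trace_mul_single (A u x : Matrix n n ℝ) :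
    ∑ i, ∑ j, A i j * fderiv ℝ (fun y => Real.exp (-(u * y).trace)) x (single j i 1)
      = -(A * uᵀ).trace * Real.exp (-(u * x).trace) := by
  simp only [fderiv_exp_neg_trace_mul_apply, trace_mul_single_one,
    ← sum_apply_mul_apply_eq_trace_mul_transpose, neg_mul, mul_neg, Finset.sum_neg_distrib,
    Finset.sum_mul, mul_assoc]

theorem sum_apply_mul_apply_mul_fderiv_fderiv_exp_neg_trace_mul_single (x G u : Matrix n n ℝ) :
    ∑ i, ∑ j, ∑ k, ∑ l, x i j * G k l *
        fderiv ℝ (fun y => fderiv ℝ (fun y => Real.exp (-(u * y).trace)) y (single l i 1)) x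
          (single j k 1)
      = (x * uᵀ * G * uᵀ).trace * Real.exp (-(u * x).trace) := by
  simp only [fderiv_fderiv_exp_neg_trace_mul_apply, trace_mul_single_one]
  set e := Real.exp (-(u * x).trace)
  simp only [trace, diag, mul_apply, transpose_apply, Finset.sum_mul]
  refine Finset.sum_congr rfl fun i _ => ?_
  rw [Finset.sum_comm_cycle]
  refine Finset.sum_congr rfl fun l _ => ?_
  rw [Finset.sum_comm]
  exact Finset.sum_congr rfl fun k _ => Finset.sum_congr rfl fun j _ => by ring

end

theorem wishart_generator_exp_affine_general (d : ℕ) (β : ℝ)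
    (H Q : Matrix (Fin d) (Fin d) ℝ)
    (u : Matrix (Fin d) (Fin d) ℝ) (hu : uᵀ = u)
    (g : Matrix (Fin d) (Fin d) ℝ → ℝ)
    (hg : g = fun x => Real.exp (-(u * x).trace))
    (x : Matrix (Fin d) (Fin d) ℝ) :
    (∑ i, ∑ j, (β • (Qᵀ * Q) + H * x + x * Hᵀ) i j *
        fderiv ℝ g x (Matrix.single j i 1))
      + 2 * ∑ i, ∑ j, ∑ k, ∑ l, x i j * (Qᵀ * Q) k l *
          fderiv ℝ (fun y => fderiv ℝ g y (Matrix.single l i 1)) x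
            (Matrix.single j k 1)
      = (-(β • (Qᵀ * Q) * u).trace
          + ((2 • (u * (Qᵀ * Q) * u) - u * H - Hᵀ * u) * x).trace) * g x := by
  subst hg
  rw [sum_apply_mul_fderiv_exp_neg_trace_mul_single,
    sum_apply_mul_apply_mul_fderiv_fderiv_exp_neg_trace_mul_single, hu]
  have hcoeff : -((β • (Qᵀ * Q) + H * x + x * Hᵀ) * u).trace + 2 * (x * u * (Qᵀ * Q) * u).trace
      = -(β • (Qᵀ * Q) * u).trace + ((2 • (u * (Qᵀ * Q) * u) - u * H - Hᵀ * u) * x).trace := by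
    simp only [add_mul, sub_mul, trace_add, trace_sub, two_smul]
    rw [trace_mul_cycle H x u, ← trace_mul_cycle Hᵀ u x, trace_mul_comm (u * (Qᵀ * Q) * u) x]
    simp only [Matrix.mul_assoc]
    ring
  rw [← hcoeff]
  ring

/-- **The Wishart generator applied to an exponentially affine function.**
For symmetric `u` and `g(x) = exp(−tr(u x))`, the Wishart generator
`𝒜 = Tr((βQᵀQ + Hx + xHᵀ)Dˢ + 2x Dˢ QᵀQ Dˢ)` satisfies
`𝒜 g(x) = (−tr(βQᵀQ u) + tr((2uQᵀQu − uH − Hᵀu)x)) g(x)`,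
where partial derivatives are directional derivatives along elementary matrices. -/
theorem wishart_generator_exp_affine (d : ℕ) (hd : 1 ≤ d) (β : ℝ)
    (H Q : Matrix (Fin d) (Fin d) ℝ)
    (u : Matrix (Fin d) (Fin d) ℝ) (hu : uᵀ = u)
    (g : Matrix (Fin d) (Fin d) ℝ → ℝ)
    (hg : g = fun x => Real.exp (-(u * x).trace))
    (x : Matrix (Fin d) (Fin d) ℝ) :
    (∑ i, ∑ j, (β • (Qᵀ * Q) + H * x + x * Hᵀ) i j *
        fderiv ℝ g x (Matrix.single j i 1))
      + 2 * ∑ i, ∑ j, ∑ k, ∑ l, x i j * (Qᵀ * Q) k l *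
          fderiv ℝ (fun y => fderiv ℝ g y (Matrix.single l i 1)) x
            (Matrix.single j k 1)
      = (-(β • (Qᵀ * Q) * u).trace
          + ((2 • (u * (Qᵀ * Q) * u) - u * H - Hᵀ * u) * x).trace) * g x :=
  wishart_generator_exp_affine_general d β H Q u hu g hg x
end

section
/- Let r̄, μ̄ ∈ ℝ and let R, M be d×d real matrices with R + M symmetric. Let φ : ℝ → ℝ and ψ : ℝ → M_d(ℝ) be differentiable, with ψ(τ) symmetric for every τ, satisfying the Riccati system φ'(τ) = tr(β QᵀQ ψ(τ)) + r̄ + μ̄ and ψ'(τ) = ψ(τ)H + Hᵀψ(τ) − 2ψ(τ)QᵀQψ(τ) + R + M. Define f(τ, x) = exp(−φ(τ) − tr(ψ(τ)·x)). Then for every τ ∈ ℝ and every x ∈ M_d(ℝ): ∂f/∂τ (τ, x) = Σ_{i,j} (βQᵀQ + Hx + xHᵀ)_{ij} · (∂f(τ,·)/∂x_{ji})(x) + 2 Σ_{i,j,k,l} x_{ij} (QᵀQ)_{kl} · (∂²f(τ,·)/∂x_{jk}∂x_{li})(x) − (r̄ + μ̄ + tr((R + M)x)) · f(τ, x). (This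 is the verification, in the paper's bond-pricing theorem for the Wishart short rate model, that the exponentially affine candidate solves the pricing PDE ∂f/∂τ = 𝒜f − (r̄ + μ̄ + Tr[(R+M)x]) f.) -/
/-!
Since `f τ` is the exponential of an affine function of `x`, its first and second partial
derivatives along elementary matrices are `f` times one entry, resp. a product of two entries,
of `ψ τ`. Summed against the coefficients of the Wishart generator they give
`f · (2 tr(x ψ QᵀQ ψ) − tr((βQᵀQ + Hx + xHᵀ) ψ))`, using `ψ = ψᵀ`. After cycling traces, the
Riccati equations say exactly that this minus the discount term equals
`∂f/∂τ = −f · (φ' + tr(ψ' x))`.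
-/

open Matrix

attribute [local instance] Matrix.linftyOpNormedAddCommGroup Matrix.linftyOpNormedSpace

namespace Matrix

variable {l m n p R : Type*} [Fintype l] [Fintype m] [Fintype n] [Fintype p]

theorem trace_mul_transpose_eq_sum [NonUnitalNonAssocSemiring R] (A B : Matrix m n R) :
    (A * Bᵀ).trace = ∑ i, ∑ j, A i j * B i j := by
  simp [trace, mul_apply]

theorem trace_mul_mul_mul_eq_sum [NonUnitalNonAssocSemiring R] (A : Matrix l m R)
    (B : Matrix m n R) (C : Matrix n p R) (D : Matrix p l R) :
    (A * B * C * D).trace = ∑ i, ∑ j, ∑ k, ∑ l, A i j * B j k * C k l * D l i := by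
  simp only [trace, diag, mul_apply, Finset.sum_mul]
  refine Finset.sum_congr rfl fun i _ => ?_
  rw [Finset.sum_comm]
  exact (Finset.sum_congr rfl fun k _ => Finset.sum_comm).trans Finset.sum_comm

theorem trace_mul_single_one_s16 [DecidableEq n] [Semiring R] (S : Matrix n n R) (a b : n) :
    (S * single a b 1).trace = S b a := by
  simp [trace_mul_single]

end Matrix

section ExpAffine

variable {n : Type*} [Fintype n]

noncomputable def traceMulLeftCLM (S : Matrix n n ℝ) : Matrix n n ℝ →L[ℝ] ℝ :=
  LinearMap.toContinuousLinearMap (traceLinearMap n ℝ ℝ ∘ₗ LinearMap.mulLeft ℝ S)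

@[simp]
theorem traceMulLeftCLM_apply (S y : Matrix n n ℝ) : traceMulLeftCLM S y = (S * y).trace := rfl

theorem HasDerivAt.exp_neg_sub_trace_mul {φ : ℝ → ℝ} {ψ : ℝ → Matrix n n ℝ} {φ' τ : ℝ}
    {ψ' : Matrix n n ℝ} (hφ : HasDerivAt φ φ' τ) (hψ : HasDerivAt ψ ψ' τ) (x : Matrix n n ℝ) :
    HasDerivAt (fun t => Real.exp (-φ t - (ψ t * x).trace))
      (Real.exp (-φ τ - (ψ τ * x).trace) * (-φ' - (ψ' * x).trace)) τ := by
  have htrace : HasDerivAt (fun t => (ψ t * x).trace) ((ψ' * x).trace) τ := by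
    simp only [trace_mul_comm _ x]
    exact (traceMulLeftCLM x).hasFDerivAt.comp_hasDerivAt τ hψ
  exact (hφ.neg.sub htrace).exp

theorem hasFDerivAt_exp_sub_trace_mul (c : ℝ) (S x : Matrix n n ℝ) :
    HasFDerivAt (fun y => Real.exp (c - (S * y).trace))
      (Real.exp (c - (S * x).trace) • -traceMulLeftCLM S) x :=
  ((traceMulLeftCLM S).hasFDerivAt.const_sub c).exp

theorem fderiv_exp_sub_trace_mul_apply (c : ℝ) (S x v : Matrix n n ℝ) :
    fderiv ℝ (fun y => Real.exp (c - (S * y).trace)) x v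
      = -(S * v).trace * Real.exp (c - (S * x).trace) := by
  simp [(hasFDerivAt_exp_sub_trace_mul c S x).fderiv, mul_comm]

theorem fderiv_fderiv_exp_sub_trace_mul_apply (c : ℝ) (S x v w : Matrix n n ℝ) :
    fderiv ℝ (fun y => fderiv ℝ (fun z => Real.exp (c - (S * z).trace)) y v) x w
      = (S * v).trace * (S * w).trace * Real.exp (c - (S * x).trace) := by
  have hpartial : HasFDerivAt (fun y => fderiv ℝ (fun z => Real.exp (c - (S * z).trace)) y v)
      (-(S * v).trace • Real.exp (c - (S * x).trace) • -traceMulLeftCLM S) x := by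
    simp only [fderiv_exp_sub_trace_mul_apply]
    exact (hasFDerivAt_exp_sub_trace_mul c S x).const_mul _
  simp only [hpartial.fderiv, smul_neg, neg_smul, neg_neg, _root_.smul_apply,
    traceMulLeftCLM_apply, smul_eq_mul]
  ring

variable [DecidableEq n]

noncomputable def wishartGenerator (β : ℝ) (H Q : Matrix n n ℝ)
    (g : Matrix n n ℝ → ℝ) (x : Matrix n n ℝ) : ℝ :=
  (∑ i, ∑ j, (β • (Qᵀ * Q) + H * x + x * Hᵀ) i j * fderiv ℝ g x (single j i 1))
    + 2 * ∑ i, ∑ j, ∑ k, ∑ l, x i j * (Qᵀ * Q) k l *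
        fderiv ℝ (fun y => fderiv ℝ g y (single l i 1)) x (single j k 1)

theorem wishartGenerator_exp_sub_trace_mul (β c : ℝ) (H Q S x : Matrix n n ℝ) :
    wishartGenerator β H Q (fun y => Real.exp (c - (S * y).trace)) x
      = (2 * (x * Sᵀ * (Qᵀ * Q) * Sᵀ).trace - ((β • (Qᵀ * Q) + H * x + x * Hᵀ) * Sᵀ).trace)
        * Real.exp (c - (S * x).trace) := by
  set A := β • (Qᵀ * Q) + H * x + x * Hᵀ
  have hdrift : ∑ i, ∑ j, A i j * fderiv ℝ (fun y => Real.exp (c - (S * y).trace)) x (single j i 1)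
      = -(A * Sᵀ).trace * Real.exp (c - (S * x).trace) := by
    simp only [fderiv_exp_sub_trace_mul_apply, trace_mul_single_one_s16, trace_mul_transpose_eq_sum,
      Finset.sum_mul, ← Finset.sum_neg_distrib]
    exact Finset.sum_congr rfl fun i _ => Finset.sum_congr rfl fun j _ => by ring
  have hdiffusion : ∑ i, ∑ j, ∑ k, ∑ l, x i j * (Qᵀ * Q) k l *
        fderiv ℝ (fun y => fderiv ℝ (fun z => Real.exp (c - (S * z).trace)) y (single l i 1)) x
          (single j k 1)
      = (x * Sᵀ * (Qᵀ * Q) * Sᵀ).trace * Real.exp (c - (S * x).trace) := by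
    simp only [fderiv_fderiv_exp_sub_trace_mul_apply, trace_mul_single_one_s16,
      trace_mul_mul_mul_eq_sum, transpose_apply, Finset.sum_mul]
    exact Finset.sum_congr rfl fun i _ => Finset.sum_congr rfl fun j _ =>
      Finset.sum_congr rfl fun k _ => Finset.sum_congr rfl fun l _ => by ring
  rw [wishartGenerator, hdrift, hdiffusion]
  ring

end ExpAffine

theorem wishart_pricing_pde_general (d : ℕ) (β : ℝ)
    (H Q : Matrix (Fin d) (Fin d) ℝ)
    (rbar μbar : ℝ) (R M : Matrix (Fin d) (Fin d) ℝ)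
    (φ : ℝ → ℝ) (ψ : ℝ → Matrix (Fin d) (Fin d) ℝ)
    (hψsymm : ∀ τ : ℝ, (ψ τ)ᵀ = ψ τ)
    (hφ : ∀ τ : ℝ, HasDerivAt φ ((β • (Qᵀ * Q) * ψ τ).trace + rbar + μbar) τ)
    (hψ : ∀ τ : ℝ, HasDerivAt ψ
      (ψ τ * H + Hᵀ * ψ τ - 2 • (ψ τ * (Qᵀ * Q) * ψ τ) + R + M) τ)
    (f : ℝ → Matrix (Fin d) (Fin d) ℝ → ℝ)
    (hf : f = fun τ x => Real.exp (-φ τ - (ψ τ * x).trace)) :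
    ∀ (τ : ℝ) (x : Matrix (Fin d) (Fin d) ℝ),
      HasDerivAt (fun t => f t x)
        ((∑ i, ∑ j, (β • (Qᵀ * Q) + H * x + x * Hᵀ) i j *
            fderiv ℝ (f τ) x (Matrix.single j i 1))
          + 2 * (∑ i, ∑ j, ∑ k, ∑ l, x i j * (Qᵀ * Q) k l *
              fderiv ℝ (fun y => fderiv ℝ (f τ) y (Matrix.single l i 1)) x
                (Matrix.single j k 1))
          - (rbar + μbar + ((R + M) * x).trace) * f τ x) τ := by
  intro τ x
  subst hf
  convert (hφ τ).exp_neg_sub_trace_mul (hψ τ) x using 1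
  change wishartGenerator β H Q _ x - _ = _
  rw [wishartGenerator_exp_sub_trace_mul, hψsymm τ]
  set S := ψ τ
  set P := Qᵀ * Q
  have hSHx : (S * H * x).trace = (H * x * S).trace := (trace_mul_cycle H x S).symm
  have hHSx : (Hᵀ * S * x).trace = (x * Hᵀ * S).trace := trace_mul_cycle Hᵀ S x
  have hSPSx : (S * P * S * x).trace = (x * S * P * S).trace := by
    rw [trace_mul_comm]
    simp only [Matrix.mul_assoc]
  simp only [add_mul, sub_mul, trace_add, trace_sub, trace_smul, smul_mul, smul_eq_mul,
    hSHx, hHSx, hSPSx]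
  ring

/-- **The exponentially affine candidate solves the Wishart bond-pricing PDE.**
If `φ` and `ψ` (with `ψ(τ)` symmetric) solve the Riccati system
`φ' = tr(βQᵀQψ) + r̄ + μ̄`, `ψ' = ψH + Hᵀψ − 2ψQᵀQψ + R + M`, then
`f(τ,x) = exp(−φ(τ) − tr(ψ(τ)x))` satisfies
`∂f/∂τ = 𝒜f − (r̄ + μ̄ + tr((R+M)x)) f`, where `𝒜` is the Wishart generator,
with partial derivatives taken along elementary matrices. -/
theorem wishart_pricing_pde (d : ℕ) (hd : 1 ≤ d) (β : ℝ)
    (H Q : Matrix (Fin d) (Fin d) ℝ)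
    (rbar μbar : ℝ) (R M : Matrix (Fin d) (Fin d) ℝ) (hRM : (R + M)ᵀ = R + M)
    (φ : ℝ → ℝ) (ψ : ℝ → Matrix (Fin d) (Fin d) ℝ)
    (hψsymm : ∀ τ : ℝ, (ψ τ)ᵀ = ψ τ)
    (hφ : ∀ τ : ℝ, HasDerivAt φ ((β • (Qᵀ * Q) * ψ τ).trace + rbar + μbar) τ)
    (hψ : ∀ τ : ℝ, HasDerivAt ψ
      (ψ τ * H + Hᵀ * ψ τ - 2 • (ψ τ * (Qᵀ * Q) * ψ τ) + R + M) τ)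
    (f : ℝ → Matrix (Fin d) (Fin d) ℝ → ℝ)
    (hf : f = fun τ x => Real.exp (-φ τ - (ψ τ * x).trace)) :
    ∀ (τ : ℝ) (x : Matrix (Fin d) (Fin d) ℝ),
      HasDerivAt (fun t => f t x)
        ((∑ i, ∑ j, (β • (Qᵀ * Q) + H * x + x * Hᵀ) i j *
            fderiv ℝ (f τ) x (Matrix.single j i 1))
          + 2 * (∑ i, ∑ j, ∑ k, ∑ l, x i j * (Qᵀ * Q) k l *
              fderiv ℝ (fun y => fderiv ℝ (f τ) y (Matrix.single l i 1)) x
                (Matrix.single j k 1))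
          - (rbar + μbar + ((R + M) * x).trace) * f τ x) τ :=
  wishart_pricing_pde_general d β H Q rbar μbar R M φ ψ hψsymm hφ hψ f hf
end
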